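/- arXiv:2311.13995 — 2 statements merged into one kernel-verified Lean document; each statement's English description precedes it below -/
import Mathlib

section
/- Lemma (Erasure): Given a λ_ert derivation Γ ⊢ a : A, there is a λ_stlc derivation |Γ| ⊢_λ |a| : |A| of the erased term at the erased type in the erased context. -/
set_option autoImplicit true

namespace Ert

/-- Syntax of λ_ert: types, propositions, terms and proofs, folded into a single
inductive (as in the paper's formalization), using de Bruijn indices. -/
inductive Tm : Type
  -- types
  | unit | nat
  | pi (A B : Tm)        -- (x : A) → B, B binds one variable
  | sigma (A B : Tm)     -- (x : A) × B
  | coprod (A B : Tm)    -- A + B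
  | set (A φ : Tm)       -- {x : A | φ}
  | pre (φ A : Tm)       -- (u : φ) ⇒ A, precondition type
  | inter (A B : Tm)     -- ∀ x : A, B, intersection type
  | union (A B : Tm)     -- ∃ x : A, B, union type
  -- propositions
  | top | bot
  | dimp (φ ψ : Tm)      -- (u : φ) ⇒ ψ
  | dand (φ ψ : Tm)      -- (u : φ) ∧ ψ
  | or (φ ψ : Tm)        -- φ ∨ ψ
  | all (A φ : Tm)       -- ∀ x : A, φ
  | ex (A φ : Tm)        -- ∃ x : A, φ
  | eq (A a b : Tm)      -- a =_A b
  -- terms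
  | var (n : ℕ) | nil
  | lam (A e : Tm) | app (f a : Tm)
  | pair (a b : Tm) | letPair (C e e' : Tm)   -- let (x,y) : [z ↦ C] = e in e'
  | inl (a : Tm) | inr (a : Tm)
  | cases (C e l r : Tm)                       -- cases [x ↦ C] e (inl y ↦ l) (inr z ↦ r)
  | lamPr (φ e : Tm) | appPr (f p : Tm)        -- λ u : φ, e ; f p
  | elem (a p : Tm) | letSet (C e e' : Tm)     -- {a, p} ; let {x,u} = e in e'
  | lamIr (A e : Tm) | appIr (f a : Tm)        -- λ ‖x:A‖, e ; f ‖a‖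
  | repr (a b : Tm) | letRepr (C e e' : Tm)    -- (‖a‖, b) ; let (‖x‖,y) = e in e'
  | zero | succ
  | natrec (C e z s : Tm)                      -- natrec [n ↦ C] e z (‖succ n‖, y ↦ s)
  | abort (p : Tm)                             -- absurd p (into a type)
  -- proofs
  | triv                                       -- ⟨⟩ : ⊤
  | pabort (p : Tm)                            -- absurd p (into a proposition)
  | plam (φ p : Tm) | pmp (p q : Tm)           -- λ̂ u : φ, p ; modus ponens
  | pconj (p q : Tm) | pletConj (θ p q : Tm)
  | porl (p : Tm) | porr (p : Tm) | pcasesOr (θ p l r : Tm)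
  | pgen (A p : Tm) | pspec (p a : Tm)         -- λ̂ ‖x:A‖, p ; p ‖a‖
  | pwit (a p : Tm) | pletWit (ψ p q : Tm)     -- ⟨‖a‖, p⟩ ; let ⟨‖x‖,u⟩ = p in q
  | pletPair (φ e q : Tm) | pletSet (φ e q : Tm) | pletRepr (φ e q : Tm)
  | psubst (φ a b p q : Tm)                    -- subst [x ↦ φ][a][b] p q
  | pcases (φ e l r : Tm) | pind (φ e z s : Tm)
  -- axioms
  | prfl (a : Tm) | puniq (a : Tm) | pdiscr (a b p : Tm)
  | pbetaPr (e p : Tm) | pbetaTy (e a : Tm) | pbetaIr (e a : Tm)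
  | pbetaLeft (C l r a : Tm) | pbetaRight (C l r b : Tm)
  | pbetaZero (C z s : Tm) | pbetaSucc (C e z s : Tm)
  | pbetaPair (a b e : Tm) | pbetaSet (a p e : Tm) | pbetaRepr (a b e : Tm)
  | petaTy (f : Tm)
  | pirPr (e p q : Tm) | pirTy (e a b : Tm)
  | petaIr (f g i p : Tm) | petaPr (f g i p : Tm)

namespace Tm

/-- Generic traversal acting on variables, tracking the number `d` of binders crossed. -/
def tmap (v : ℕ → ℕ → Tm) : ℕ → Tm → Tm
  | _, .unit => .unit
  | _, .nat => .nat
  | d, .pi A B => .pi (tmap v d A) (tmap v (d+1) B)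
  | d, .sigma A B => .sigma (tmap v d A) (tmap v (d+1) B)
  | d, .coprod A B => .coprod (tmap v d A) (tmap v d B)
  | d, .set A φ => .set (tmap v d A) (tmap v (d+1) φ)
  | d, .pre φ A => .pre (tmap v d φ) (tmap v (d+1) A)
  | d, .inter A B => .inter (tmap v d A) (tmap v (d+1) B)
  | d, .union A B => .union (tmap v d A) (tmap v (d+1) B)
  | _, .top => .top
  | _, .bot => .bot
  | d, .dimp φ ψ => .dimp (tmap v d φ) (tmap v (d+1) ψ)
  | d, .dand φ ψ => .dand (tmap v d φ) (tmap v (d+1) ψ)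
  | d, .or φ ψ => .or (tmap v d φ) (tmap v d ψ)
  | d, .all A φ => .all (tmap v d A) (tmap v (d+1) φ)
  | d, .ex A φ => .ex (tmap v d A) (tmap v (d+1) φ)
  | d, .eq A a b => .eq (tmap v d A) (tmap v d a) (tmap v d b)
  | d, .var n => v d n
  | _, .nil => .nil
  | d, .lam A e => .lam (tmap v d A) (tmap v (d+1) e)
  | d, .app f a => .app (tmap v d f) (tmap v d a)
  | d, .pair a b => .pair (tmap v d a) (tmap v d b)
  | d, .letPair C e e' => .letPair (tmap v (d+1) C) (tmap v d e) (tmap v (d+2) e')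
  | d, .inl a => .inl (tmap v d a)
  | d, .inr a => .inr (tmap v d a)
  | d, .cases C e l r => .cases (tmap v (d+1) C) (tmap v d e) (tmap v (d+1) l) (tmap v (d+1) r)
  | d, .lamPr φ e => .lamPr (tmap v d φ) (tmap v (d+1) e)
  | d, .appPr f p => .appPr (tmap v d f) (tmap v d p)
  | d, .elem a p => .elem (tmap v d a) (tmap v d p)
  | d, .letSet C e e' => .letSet (tmap v (d+1) C) (tmap v d e) (tmap v (d+2) e')
  | d, .lamIr A e => .lamIr (tmap v d A) (tmap v (d+1) e)
  | d, .appIr f a => .appIr (tmap v d f) (tmap v d a)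
  | d, .repr a b => .repr (tmap v d a) (tmap v d b)
  | d, .letRepr C e e' => .letRepr (tmap v (d+1) C) (tmap v d e) (tmap v (d+2) e')
  | _, .zero => .zero
  | _, .succ => .succ
  | d, .natrec C e z s => .natrec (tmap v (d+1) C) (tmap v d e) (tmap v d z) (tmap v (d+2) s)
  | d, .abort p => .abort (tmap v d p)
  | _, .triv => .triv
  | d, .pabort p => .pabort (tmap v d p)
  | d, .plam φ p => .plam (tmap v d φ) (tmap v (d+1) p)
  | d, .pmp p q => .pmp (tmap v d p) (tmap v d q)
  | d, .pconj p q => .pconj (tmap v d p) (tmap v d q)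
  | d, .pletConj θ p q => .pletConj (tmap v (d+1) θ) (tmap v d p) (tmap v (d+2) q)
  | d, .porl p => .porl (tmap v d p)
  | d, .porr p => .porr (tmap v d p)
  | d, .pcasesOr θ p l r =>
      .pcasesOr (tmap v (d+1) θ) (tmap v d p) (tmap v (d+1) l) (tmap v (d+1) r)
  | d, .pgen A p => .pgen (tmap v d A) (tmap v (d+1) p)
  | d, .pspec p a => .pspec (tmap v d p) (tmap v d a)
  | d, .pwit a p => .pwit (tmap v d a) (tmap v d p)
  | d, .pletWit ψ p q => .pletWit (tmap v (d+1) ψ) (tmap v d p) (tmap v (d+2) q)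
  | d, .pletPair φ e q => .pletPair (tmap v (d+1) φ) (tmap v d e) (tmap v (d+2) q)
  | d, .pletSet φ e q => .pletSet (tmap v (d+1) φ) (tmap v d e) (tmap v (d+2) q)
  | d, .pletRepr φ e q => .pletRepr (tmap v (d+1) φ) (tmap v d e) (tmap v (d+2) q)
  | d, .psubst φ a b p q =>
      .psubst (tmap v (d+1) φ) (tmap v d a) (tmap v d b) (tmap v d p) (tmap v d q)
  | d, .pcases φ e l r => .pcases (tmap v (d+1) φ) (tmap v d e) (tmap v (d+1) l) (tmap v (d+1) r)
  | d, .pind φ e z s => .pind (tmap v (d+1) φ) (tmap v d e) (tmap v d z) (tmap v (d+2) s)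
  | d, .prfl a => .prfl (tmap v d a)
  | d, .puniq a => .puniq (tmap v d a)
  | d, .pdiscr a b p => .pdiscr (tmap v d a) (tmap v d b) (tmap v d p)
  | d, .pbetaPr e p => .pbetaPr (tmap v (d+1) e) (tmap v d p)
  | d, .pbetaTy e a => .pbetaTy (tmap v (d+1) e) (tmap v d a)
  | d, .pbetaIr e a => .pbetaIr (tmap v (d+1) e) (tmap v d a)
  | d, .pbetaLeft C l r a =>
      .pbetaLeft (tmap v (d+1) C) (tmap v (d+1) l) (tmap v (d+1) r) (tmap v d a)
  | d, .pbetaRight C l r b =>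
      .pbetaRight (tmap v (d+1) C) (tmap v (d+1) l) (tmap v (d+1) r) (tmap v d b)
  | d, .pbetaZero C z s => .pbetaZero (tmap v (d+1) C) (tmap v d z) (tmap v (d+2) s)
  | d, .pbetaSucc C e z s => .pbetaSucc (tmap v (d+1) C) (tmap v d e) (tmap v d z) (tmap v (d+2) s)
  | d, .pbetaPair a b e => .pbetaPair (tmap v d a) (tmap v d b) (tmap v (d+2) e)
  | d, .pbetaSet a p e => .pbetaSet (tmap v d a) (tmap v d p) (tmap v (d+2) e)
  | d, .pbetaRepr a b e => .pbetaRepr (tmap v d a) (tmap v d b) (tmap v (d+2) e)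
  | d, .petaTy f => .petaTy (tmap v d f)
  | d, .pirPr e p q => .pirPr (tmap v (d+1) e) (tmap v d p) (tmap v d q)
  | d, .pirTy e a b => .pirTy (tmap v d e) (tmap v d a) (tmap v d b)
  | d, .petaIr f g i p => .petaIr (tmap v d f) (tmap v d g) (tmap v d i) (tmap v (d+1) p)
  | d, .petaPr f g i p => .petaPr (tmap v d f) (tmap v d g) (tmap v d i) (tmap v (d+1) p)

/-- Renaming of de Bruijn variables. -/
def rename (t : Tm) (ρ : ℕ → ℕ) : Tm :=
  t.tmap (fun d n => if n < d then .var n else .var (ρ (n - d) + d)) 0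

/-- Weakening: shift all free variables up by one. -/
def wk0 (t : Tm) : Tm := t.rename Nat.succ

/-- Capture-avoiding substitution `[σ]t` for a substitution `σ : Var → Tm`. -/
def subst (t : Tm) (σ : ℕ → Tm) : Tm :=
  t.tmap (fun d n => if n < d then .var n else (σ (n - d)).rename (· + d)) 0

/-- Substitute `v` for variable 0, mapping the remaining variables `n+1 ↦ n+k`
(used to state rules such as `[(x, y)/z]C` with `k = 2`). -/
def substK (t v : Tm) (k : ℕ) : Tm :=
  t.subst fun n => match n with | 0 => v | n+1 => .var (n+k)

/-- Substitution `[v/x]t` of `v` for the most recently bound variable. -/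
def subst0 (t v : Tm) : Tm := t.substK v 0

/-- Simultaneous substitution `[v1/x][v0/y]t` for the two most recently bound variables. -/
def subst2 (t v1 v0 : Tm) : Tm :=
  t.subst fun n => match n with | 0 => v0 | 1 => v1 | n+2 => .var n

end Tm

/-- Hypothesis kinds: computational (`x : A`) or ghost (`‖x : A‖`). -/
inductive HypKind : Type
  | comp | ghost

/-- Context hypotheses: a typed (computational or ghost) variable, or a
propositional hypothesis `u : φ`. -/
inductive Hyp : Type
  | tm (k : HypKind) (A : Tm)
  | pf (φ : Tm)

/-- A context is a list of hypotheses, most recent first. -/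
abbrev Ctx := List Hyp

def Hyp.wk : Hyp → Hyp
  | .tm k A => .tm k A.wk0
  | .pf φ => .pf φ.wk0

/-- `HasVar Γ n H`: de Bruijn variable `n` is declared in `Γ` with hypothesis `H`
(whose payload is already weakened to live in `Γ`). -/
inductive HasVar : Ctx → ℕ → Hyp → Prop
  | head {Γ : Ctx} {H : Hyp} : HasVar (H :: Γ) 0 H.wk
  | tail {Γ : Ctx} {H H' : Hyp} {n : ℕ} : HasVar Γ n H → HasVar (H' :: Γ) (n+1) H.wk

/-- The full upgrade `↑Γ` of a context: every ghost hypothesis becomes computational. -/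
def upg : Ctx → Ctx
  | [] => []
  | .tm _ A :: Γ => .tm .comp A :: upg Γ
  | .pf φ :: Γ => .pf φ :: upg Γ

/-- Typing annotations: the four judgments `Γ ⊢ A ty`, `Γ ⊢ φ pr`,
`Γ ⊢ a : A`, and `Γ ⊢ p : φ` are folded into one inductive `Judg`. -/
inductive Annot : Type
  | ty
  | pr
  | tm (A : Tm)
  | pf (φ : Tm)

/-- The typing judgments of λ_ert. -/
inductive Judg : Ctx → Tm → Annot → Prop
  -- Type well-formedness (figure: λ_ert Type Well-formedness)
  | unit_wf : Judg Γ .unit .ty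
  | nat_wf : Judg Γ .nat .ty
  | pi_wf : Judg Γ A .ty → Judg (.tm .comp A :: Γ) B .ty → Judg Γ (.pi A B) .ty
  | sigma_wf : Judg Γ A .ty → Judg (.tm .comp A :: Γ) B .ty → Judg Γ (.sigma A B) .ty
  | coprod_wf : Judg Γ A .ty → Judg Γ B .ty → Judg Γ (.coprod A B) .ty
  | set_wf : Judg Γ A .ty → Judg (.tm .comp A :: Γ) φ .pr → Judg Γ (.set A φ) .ty
  | pre_wf : Judg Γ φ .pr → Judg (.pf φ :: Γ) A .ty → Judg Γ (.pre φ A) .ty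
  | inter_wf : Judg Γ A .ty → Judg (.tm .comp A :: Γ) B .ty → Judg Γ (.inter A B) .ty
  | union_wf : Judg Γ A .ty → Judg (.tm .comp A :: Γ) B .ty → Judg Γ (.union A B) .ty
  -- Proposition well-formedness (figure: λ_ert Proposition Well-formedness)
  | top_wf : Judg Γ .top .pr
  | bot_wf : Judg Γ .bot .pr
  | dimp_wf : Judg Γ φ .pr → Judg (.pf φ :: Γ) ψ .pr → Judg Γ (.dimp φ ψ) .pr
  | dand_wf : Judg Γ φ .pr → Judg (.pf φ :: Γ) ψ .pr → Judg Γ (.dand φ ψ) .pr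
  | or_wf : Judg Γ φ .pr → Judg Γ ψ .pr → Judg Γ (.or φ ψ) .pr
  | all_wf : Judg Γ A .ty → Judg (.tm .comp A :: Γ) φ .pr → Judg Γ (.all A φ) .pr
  | ex_wf : Judg Γ A .ty → Judg (.tm .comp A :: Γ) φ .pr → Judg Γ (.ex A φ) .pr
  | eq_wf : Judg Γ A .ty → Judg (upg Γ) a (.tm A) → Judg (upg Γ) b (.tm A) →
      Judg Γ (.eq A a b) .pr
  -- Term typing (figure: λ_ert Term Typing)
  | var : HasVar Γ n (.tm .comp A) → Judg Γ (.var n) (.tm A)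
  | nil_intro : Judg Γ .nil (.tm .unit)
  | zero : Judg Γ .zero (.tm .nat)
  | succ : Judg Γ .succ (.tm (.pi .nat .nat))
  | abort : Judg Γ p (.pf .bot) → Judg Γ (.abort p) (.tm A)
  | lam : Judg (.tm .comp A :: Γ) e (.tm B) → Judg Γ (.lam A e) (.tm (.pi A B))
  | app : Judg Γ f (.tm (.pi A B)) → Judg Γ a (.tm A) →
      Judg Γ (.app f a) (.tm (B.subst0 a))
  | pair : Judg Γ l (.tm A) → Judg Γ r (.tm (B.subst0 l)) →
      Judg Γ (.pair l r) (.tm (.sigma A B))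
  | letPair : Judg Γ e (.tm (.sigma A B)) →
      Judg (.tm .comp (.sigma A B) :: Γ) C .ty →
      Judg (.tm .comp B :: .tm .comp A :: Γ) e'
        (.tm (C.substK (.pair (.var 1) (.var 0)) 2)) →
      Judg Γ (.letPair C e e') (.tm (C.subst0 e))
  | inl : Judg Γ e (.tm A) → Judg Γ (.inl e) (.tm (.coprod A B))
  | inr : Judg Γ e (.tm B) → Judg Γ (.inr e) (.tm (.coprod A B))
  | cases : Judg (.tm .comp (.coprod A B) :: Γ) C .ty →
      Judg Γ e (.tm (.coprod A B)) →
      Judg (.tm .comp A :: Γ) l (.tm (C.substK (.inl (.var 0)) 1)) →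
      Judg (.tm .comp B :: Γ) r (.tm (C.substK (.inr (.var 0)) 1)) →
      Judg Γ (.cases C e l r) (.tm (C.subst0 e))
  | lamPr : Judg (.pf φ :: Γ) e (.tm A) → Judg Γ (.lamPr φ e) (.tm (.pre φ A))
  | appPr : Judg Γ f (.tm (.pre φ A)) → Judg Γ p (.pf φ) →
      Judg Γ (.appPr f p) (.tm (A.subst0 p))
  | elem : Judg Γ a (.tm A) → Judg Γ p (.pf (φ.subst0 a)) →
      Judg Γ (.elem a p) (.tm (.set A φ))
  | letSet : Judg Γ e (.tm (.set A φ)) →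
      Judg (.tm .comp (.set A φ) :: Γ) C .ty →
      Judg (.pf φ :: .tm .comp A :: Γ) e'
        (.tm (C.substK (.elem (.var 1) (.var 0)) 2)) →
      Judg Γ (.letSet C e e') (.tm (C.subst0 e))
  | lamIr : Judg (.tm .ghost A :: Γ) e (.tm B) → Judg Γ (.lamIr A e) (.tm (.inter A B))
  | appIr : Judg Γ f (.tm (.inter A B)) → Judg (upg Γ) a (.tm A) →
      Judg Γ (.appIr f a) (.tm (B.subst0 a))
  | repr : Judg (upg Γ) a (.tm A) → Judg Γ b (.tm (B.subst0 a)) →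
      Judg Γ (.repr a b) (.tm (.union A B))
  | letRepr : Judg Γ e (.tm (.union A B)) →
      Judg (.tm .comp (.union A B) :: Γ) C .ty →
      Judg (.tm .comp B :: .tm .ghost A :: Γ) e'
        (.tm (C.substK (.repr (.var 1) (.var 0)) 2)) →
      Judg Γ (.letRepr C e e') (.tm (C.subst0 e))
  | natrec : Judg (.tm .comp .nat :: Γ) C .ty →
      Judg Γ e (.tm .nat) →
      Judg Γ z (.tm (C.subst0 .zero)) →
      Judg (.tm .comp C :: .tm .ghost .nat :: Γ) s
        (.tm (C.substK (.app .succ (.var 1)) 2)) →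
      Judg Γ (.natrec C e z s) (.tm (C.subst0 e))
  -- Proof typing (figure: λ_ert Proof Typing)
  | pvar : HasVar Γ n (.pf φ) → Judg Γ (.var n) (.pf φ)
  | triv : Judg Γ .triv (.pf .top)
  | pabort : Judg Γ p (.pf .bot) → Judg Γ (.pabort p) (.pf φ)
  | plam : Judg (.pf φ :: Γ) p (.pf ψ) → Judg Γ (.plam φ p) (.pf (.dimp φ ψ))
  | pmp : Judg Γ p (.pf (.dimp φ ψ)) → Judg Γ q (.pf φ) →
      Judg Γ (.pmp p q) (.pf (ψ.subst0 q))
  | pconj : Judg Γ p (.pf φ) → Judg Γ q (.pf (ψ.subst0 p)) →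
      Judg Γ (.pconj p q) (.pf (.dand φ ψ))
  | pletConj : Judg Γ p (.pf (.dand φ ψ)) →
      Judg (.pf (.dand φ ψ) :: Γ) θ .pr →
      Judg (.pf ψ :: .pf φ :: Γ) q (.pf (θ.substK (.pconj (.var 1) (.var 0)) 2)) →
      Judg Γ (.pletConj θ p q) (.pf (θ.subst0 p))
  | porl : Judg Γ p (.pf φ) → Judg Γ (.porl p) (.pf (.or φ ψ))
  | porr : Judg Γ p (.pf ψ) → Judg Γ (.porr p) (.pf (.or φ ψ))
  | pcasesOr : Judg (.pf (.or φ ψ) :: Γ) θ .pr →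
      Judg Γ p (.pf (.or φ ψ)) →
      Judg (.pf φ :: Γ) l (.pf (θ.substK (.porl (.var 0)) 1)) →
      Judg (.pf ψ :: Γ) r (.pf (θ.substK (.porr (.var 0)) 1)) →
      Judg Γ (.pcasesOr θ p l r) (.pf (θ.subst0 p))
  | pgen : Judg (.tm .ghost A :: Γ) p (.pf φ) → Judg Γ (.pgen A p) (.pf (.all A φ))
  | pspec : Judg Γ p (.pf (.all A φ)) → Judg (upg Γ) a (.tm A) →
      Judg Γ (.pspec p a) (.pf (φ.subst0 a))
  | pwit : Judg (upg Γ) a (.tm A) → Judg Γ p (.pf (φ.subst0 a)) →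
      Judg Γ (.pwit a p) (.pf (.ex A φ))
  | pletWit : Judg Γ p (.pf (.ex A φ)) →
      Judg (.pf (.ex A φ) :: Γ) ψ .pr →
      Judg (.pf φ :: .tm .comp A :: Γ) q (.pf (ψ.substK (.pwit (.var 1) (.var 0)) 2)) →
      Judg Γ (.pletWit ψ p q) (.pf (ψ.subst0 p))
  | pletPair : Judg (upg Γ) e (.tm (.sigma A B)) →
      Judg (.tm .comp (.sigma A B) :: Γ) φ .pr →
      Judg (.tm .comp B :: .tm .comp A :: Γ) q
        (.pf (φ.substK (.pair (.var 1) (.var 0)) 2)) →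
      Judg Γ (.pletPair φ e q) (.pf (φ.subst0 e))
  | pletSet : Judg (upg Γ) e (.tm (.set A φ)) →
      Judg (.tm .comp (.set A φ) :: Γ) ψ .pr →
      Judg (.pf φ :: .tm .comp A :: Γ) q
        (.pf (ψ.substK (.elem (.var 1) (.var 0)) 2)) →
      Judg Γ (.pletSet ψ e q) (.pf (ψ.subst0 e))
  | pletRepr : Judg (upg Γ) e (.tm (.union A B)) →
      Judg (.tm .comp (.union A B) :: Γ) ψ .pr →
      Judg (.tm .comp B :: .tm .comp A :: Γ) q
        (.pf (ψ.substK (.repr (.var 1) (.var 0)) 2)) →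
      Judg Γ (.pletRepr ψ e q) (.pf (ψ.subst0 e))
  | psubst : Judg (upg Γ) a (.tm A) → Judg (upg Γ) b (.tm A) →
      Judg Γ p (.pf (.eq A a b)) → Judg Γ q (.pf (φ.subst0 a)) →
      Judg Γ (.psubst φ a b p q) (.pf (φ.subst0 b))
  | pcases : Judg (.tm .comp (.coprod A B) :: Γ) φ .pr →
      Judg Γ e (.tm (.coprod A B)) →
      Judg (.tm .comp A :: Γ) l (.pf (φ.substK (.inl (.var 0)) 1)) →
      Judg (.tm .comp B :: Γ) r (.pf (φ.substK (.inr (.var 0)) 1)) →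
      Judg Γ (.pcases φ e l r) (.pf (φ.subst0 e))
  | pind : Judg (.tm .comp .nat :: Γ) φ .pr →
      Judg (upg Γ) e (.tm .nat) →
      Judg Γ z (.pf (φ.subst0 .zero)) →
      Judg (.pf φ :: .tm .comp .nat :: Γ) s (.pf (φ.substK (.app .succ (.var 1)) 2)) →
      Judg Γ (.pind φ e z s) (.pf (φ.subst0 e))
  -- Axioms (figure: λ_ert Axiom Typing)
  | prfl : Judg (upg Γ) a (.tm A) → Judg Γ (.prfl a) (.pf (.eq A a a))
  | puniq : Judg (upg Γ) a (.tm .unit) → Judg Γ (.puniq a) (.pf (.eq .unit a .nil))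
  | pdiscr : Judg (upg Γ) a (.tm A) → Judg (upg Γ) b (.tm B) →
      Judg Γ p (.pf (.eq (.coprod A B) (.inl a) (.inr b))) →
      Judg Γ (.pdiscr a b p) (.pf .bot)
  | pbetaPr : Judg (.pf φ :: upg Γ) e (.tm A) → Judg Γ p (.pf φ) →
      Judg Γ (.pbetaPr e p)
        (.pf (.eq (A.subst0 p) (.appPr (.lamPr φ e) p) (e.subst0 p)))
  | pbetaTy : Judg (.tm .comp A :: upg Γ) e (.tm B) → Judg (upg Γ) a (.tm A) →
      Judg Γ (.pbetaTy e a)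
        (.pf (.eq (B.subst0 a) (.app (.lam A e) a) (e.subst0 a)))
  | pbetaIr : Judg (.tm .comp A :: upg Γ) e (.tm B) → Judg (upg Γ) a (.tm A) →
      Judg Γ (.pbetaIr e a)
        (.pf (.eq (B.subst0 a) (.appIr (.lamIr A e) a) (e.subst0 a)))
  | pbetaLeft : Judg (upg Γ) a (.tm A) →
      Judg (.tm .comp A :: upg Γ) l (.tm (C.substK (.inl (.var 0)) 1)) →
      Judg (.tm .comp B :: upg Γ) r (.tm (C.substK (.inr (.var 0)) 1)) →
      Judg Γ (.pbetaLeft C l r a)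
        (.pf (.eq (C.subst0 (.inl a)) (.cases C (.inl a) l r) (l.subst0 a)))
  | pbetaRight : Judg (upg Γ) b (.tm B) →
      Judg (.tm .comp A :: upg Γ) l (.tm (C.substK (.inl (.var 0)) 1)) →
      Judg (.tm .comp B :: upg Γ) r (.tm (C.substK (.inr (.var 0)) 1)) →
      Judg Γ (.pbetaRight C l r b)
        (.pf (.eq (C.subst0 (.inr b)) (.cases C (.inr b) l r) (r.subst0 b)))
  | pbetaZero : Judg (upg Γ) z (.tm (C.subst0 .zero)) →
      Judg (.tm .comp C :: .tm .comp .nat :: upg Γ) s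
        (.tm (C.substK (.app .succ (.var 1)) 2)) →
      Judg Γ (.pbetaZero C z s)
        (.pf (.eq (C.subst0 .zero) (.natrec C .zero z s) z))
  | pbetaSucc : Judg (upg Γ) e (.tm .nat) →
      Judg (upg Γ) z (.tm (C.subst0 .zero)) →
      Judg (.tm .comp C :: .tm .comp .nat :: upg Γ) s
        (.tm (C.substK (.app .succ (.var 1)) 2)) →
      Judg Γ (.pbetaSucc C e z s)
        (.pf (.eq (C.subst0 (.app .succ e)) (.natrec C (.app .succ e) z s)
          (s.subst2 e (.natrec C e z s))))
  | pbetaPair : Judg (upg Γ) a (.tm A) → Judg (upg Γ) b (.tm (B.subst0 a)) →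
      Judg (.tm .comp B :: .tm .comp A :: upg Γ) e
        (.tm (C.substK (.pair (.var 1) (.var 0)) 2)) →
      Judg Γ (.pbetaPair a b e)
        (.pf (.eq (C.subst0 (.pair a b)) (.letPair C (.pair a b) e) (e.subst2 a b)))
  | pbetaSet : Judg (upg Γ) a (.tm A) → Judg (upg Γ) p (.pf (φ.subst0 a)) →
      Judg (.pf φ :: .tm .comp A :: upg Γ) e
        (.tm (C.substK (.elem (.var 1) (.var 0)) 2)) →
      Judg Γ (.pbetaSet a p e)
        (.pf (.eq (C.subst0 (.elem a p)) (.letSet C (.elem a p) e) (e.subst2 a p)))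
  | pbetaRepr : Judg (upg Γ) a (.tm A) → Judg (upg Γ) b (.tm (B.subst0 a)) →
      Judg (.tm .comp B :: .tm .comp A :: upg Γ) e
        (.tm (C.substK (.repr (.var 1) (.var 0)) 2)) →
      Judg Γ (.pbetaRepr a b e)
        (.pf (.eq (C.subst0 (.repr a b)) (.letRepr C (.repr a b) e) (e.subst2 a b)))
  | petaTy : Judg (upg Γ) f (.tm (.pi A B)) →
      Judg Γ (.petaTy f) (.pf (.eq (.pi A B) (.lam A (.app f.wk0 (.var 0))) f))
  | pirPr : Judg Γ A .ty → Judg (.pf φ :: upg Γ) e (.tm A.wk0) →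
      Judg (upg Γ) p (.pf φ) → Judg (upg Γ) q (.pf φ) →
      Judg Γ (.pirPr e p q) (.pf (.eq A (e.subst0 p) (e.subst0 q)))
  | pirTy : Judg Γ B .ty → Judg (upg Γ) e (.tm (.inter A B.wk0)) →
      Judg (upg Γ) a (.tm A) → Judg (upg Γ) b (.tm A) →
      Judg Γ (.pirTy e a b) (.pf (.eq B (.appIr e a) (.appIr e b)))
  | petaIr : Judg (upg Γ) f (.tm (.inter A B)) → Judg (upg Γ) g (.tm (.inter A B)) →
      Judg (upg Γ) i (.tm A) →
      Judg (.tm .comp A :: Γ) p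
        (.pf (.eq B (.appIr f.wk0 (.var 0)) (.appIr g.wk0 (.var 0)))) →
      Judg Γ (.petaIr f g i p) (.pf (.eq (.inter A B) f g))
  | petaPr : Judg (upg Γ) f (.tm (.pre φ B)) → Judg (upg Γ) g (.tm (.pre φ B)) →
      Judg (upg Γ) i (.pf φ) →
      Judg (.pf φ :: Γ) p
        (.pf (.eq B (.appPr f.wk0 (.var 0)) (.appPr g.wk0 (.var 0)))) →
      Judg Γ (.petaPr f g i p) (.pf (.eq (.pre φ B) f g))

/-- `Γ ⊢ A ty`: `A` is a well-formed type in `Γ`. -/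
abbrev IsTy (Γ : Ctx) (A : Tm) : Prop := Judg Γ A .ty
/-- `Γ ⊢ φ pr`: `φ` is a well-formed proposition in `Γ`. -/
abbrev IsPr (Γ : Ctx) (φ : Tm) : Prop := Judg Γ φ .pr
/-- `Γ ⊢ a : A`: term typing. -/
abbrev HasTy (Γ : Ctx) (a A : Tm) : Prop := Judg Γ a (.tm A)
/-- `Γ ⊢ p : φ`: proof typing. -/
abbrev HasPf (Γ : Ctx) (p φ : Tm) : Prop := Judg Γ p (.pf φ)

/-- `Γ ok`: context well-formedness. -/
inductive IsCtx : Ctx → Prop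
  | nil : IsCtx []
  | cons_tm {Γ : Ctx} {k : HypKind} {A : Tm} : IsCtx Γ → IsTy Γ A → IsCtx (.tm k A :: Γ)
  | cons_pf {Γ : Ctx} {φ : Tm} : IsCtx Γ → IsPr Γ φ → IsCtx (.pf φ :: Γ)

/-- The upgrade relation `Γ ⊑ Δ`: `Δ` is obtained from `Γ` by replacing some ghost
hypotheses by computational hypotheses with the same type. -/
inductive Upgrades : Ctx → Ctx → Prop
  | nil : Upgrades [] []
  | cons {Γ Δ : Ctx} (H : Hyp) : Upgrades Γ Δ → Upgrades (H :: Γ) (H :: Δ)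
  | upgrade {Γ Δ : Ctx} {A : Tm} : Upgrades Γ Δ →
      Upgrades (.tm .ghost A :: Γ) (.tm .comp A :: Δ)

/-- `Γ ⊢' σ : Δ`: well-formed substitution from `Γ` to `Δ`. -/
def SubstWf (σ : ℕ → Tm) (Γ Δ : Ctx) : Prop :=
  (∀ n A, HasVar Γ n (.tm .comp A) → HasTy Δ (σ n) (A.subst σ)) ∧
  (∀ n φ, HasVar Γ n (.pf φ) → HasPf Δ (σ n) (φ.subst σ)) ∧
  (∀ n A, HasVar Γ n (.tm .ghost A) →
    (∃ m, σ n = .var m ∧ HasVar Δ m (.tm .ghost (A.subst σ))) ∨ HasTy Δ (σ n) (A.subst σ))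

/-- `Γ ⊢ σ : Δ`: strict well-formed substitution (ghost variables are only
replaced with ghost variables). -/
def SubstStrict (σ : ℕ → Tm) (Γ Δ : Ctx) : Prop :=
  (∀ n A, HasVar Γ n (.tm .comp A) → HasTy Δ (σ n) (A.subst σ)) ∧
  (∀ n φ, HasVar Γ n (.pf φ) → HasPf Δ (σ n) (φ.subst σ)) ∧
  (∀ n A, HasVar Γ n (.tm .ghost A) → ∃ m, σ n = .var m ∧ HasVar Δ m (.tm .ghost (A.subst σ)))

end Ert

set_option autoImplicit true

namespace Stlc

/-- Simple types of λ_stlc. -/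
inductive Ty : Type
  | empty | unit | nat
  | arrow (A B : Ty)
  | prod (A B : Ty)
  | sum (A B : Ty)

/-- Terms of λ_stlc (de Bruijn indices), with an `error` stop and let-bindings. -/
inductive Tm : Type
  | var (n : ℕ)
  | nil                     -- ()
  | err                     -- error
  | lam (A : Ty) (e : Tm)
  | app (f a : Tm)
  | pair (a b : Tm)
  | letPair (e e' : Tm)     -- let (x, y) = e in e'   (e' binds two variables)
  | inl (a : Tm)
  | inr (a : Tm)
  | cases (e l r : Tm)      -- cases e (inl x ↦ l) (inr y ↦ r)
  | zero
  | succ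
  | natrec (e z s : Tm)     -- natrec e z (x ↦ s)
  | letIn (a e : Tm)        -- let x = a in e

namespace Tm

/-- Generic traversal acting on variables, tracking the number of binders crossed. -/
def tmap (v : ℕ → ℕ → Tm) : ℕ → Tm → Tm
  | d, .var n => v d n
  | _, .nil => .nil
  | _, .err => .err
  | d, .lam A e => .lam A (tmap v (d+1) e)
  | d, .app f a => .app (tmap v d f) (tmap v d a)
  | d, .pair a b => .pair (tmap v d a) (tmap v d b)
  | d, .letPair e e' => .letPair (tmap v d e) (tmap v (d+2) e')
  | d, .inl a => .inl (tmap v d a)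
  | d, .inr a => .inr (tmap v d a)
  | d, .cases e l r => .cases (tmap v d e) (tmap v (d+1) l) (tmap v (d+1) r)
  | _, .zero => .zero
  | _, .succ => .succ
  | d, .natrec e z s => .natrec (tmap v d e) (tmap v d z) (tmap v (d+1) s)
  | d, .letIn a e => .letIn (tmap v d a) (tmap v (d+1) e)

/-- Renaming of de Bruijn variables. -/
def rename (t : Tm) (ρ : ℕ → ℕ) : Tm :=
  t.tmap (fun d n => if n < d then .var n else .var (ρ (n - d) + d)) 0

/-- Capture-avoiding substitution `[σ]t`. -/
def subst (t : Tm) (σ : ℕ → Tm) : Tm :=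
  t.tmap (fun d n => if n < d then .var n else (σ (n - d)).rename (· + d)) 0

end Tm

/-- Contexts are lists of types, most recent first. -/
abbrev Ctx := List Ty

/-- Variable lookup. -/
inductive HasVar : Ctx → ℕ → Ty → Type
  | head {Γ : Ctx} {A : Ty} : HasVar (A :: Γ) 0 A
  | tail {Γ : Ctx} {A B : Ty} {n : ℕ} : HasVar Γ n A → HasVar (B :: Γ) (n+1) A

/-- The typing judgment `Γ ⊢_λ t : A` of λ_stlc. -/
inductive HasType : Ctx → Tm → Ty → Type
  | var : HasVar Γ n A → HasType Γ (.var n) A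
  | nil : HasType Γ .nil .unit
  | err : HasType Γ .err A
  | lam : HasType (A :: Γ) e B → HasType Γ (.lam A e) (.arrow A B)
  | app : HasType Γ f (.arrow A B) → HasType Γ a A → HasType Γ (.app f a) B
  | pair : HasType Γ l A → HasType Γ r B → HasType Γ (.pair l r) (.prod A B)
  | letPair : HasType Γ e (.prod A B) → HasType (B :: A :: Γ) e' C →
      HasType Γ (.letPair e e') C
  | inl : HasType Γ e A → HasType Γ (.inl e) (.sum A B)
  | inr : HasType Γ e B → HasType Γ (.inr e) (.sum A B)
  | cases : HasType Γ e (.sum A B) → HasType (A :: Γ) l C → HasType (B :: Γ) r C →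
      HasType Γ (.cases e l r) C
  | zero : HasType Γ .zero .nat
  | succ : HasType Γ .succ (.arrow .nat .nat)
  | natrec : HasType Γ e .nat → HasType Γ z C → HasType (C :: Γ) s C →
      HasType Γ (.natrec e z s) C
  | letIn : HasType Γ a A → HasType (A :: Γ) e B → HasType Γ (.letIn a e) B

/-- `Γ ⊢_λ σ : Δ`: a λ_stlc substitution from `Γ` to `Δ`. -/
def SubstWf (σ : ℕ → Tm) (Γ Δ : Ctx) : Type :=
  ∀ n A, HasVar Γ n A → HasType Δ (σ n) A

/-- Denotation of types: call-by-value semantics over the exception monad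
(`Option`, with `none` playing the role of the single exception `error`). -/
def Ty.denote : Ty → Type
  | .empty => Empty
  | .unit => Unit
  | .nat => ℕ
  | .arrow A B => A.denote → Option B.denote
  | .prod A B => A.denote × B.denote
  | .sum A B => A.denote ⊕ B.denote

/-- Denotation of contexts: `⟦·⟧ = 1`, `⟦Γ, x : A⟧ = ⟦Γ⟧ × M ⟦A⟧`. -/
def Ctx.denote : Ctx → Type
  | [] => Unit
  | A :: Γ => Option (Ty.denote A) × Ctx.denote Γ

/-- Projection for a variable (returning the stored monadic value). -/
def HasVar.denote : {Γ : Ctx} → {n : ℕ} → {A : Ty} →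
    HasVar Γ n A → Ctx.denote Γ → Option (Ty.denote A)
  | _, _, _, .head, G => G.1
  | _, _, _, .tail v, G => v.denote G.2

/-- Iteration in the exception monad, used to interpret `natrec`. -/
def iterOpt {α : Type} (z : Option α) (f : Option α → Option α) : ℕ → Option α
  | 0 => z
  | n+1 => f (iterOpt z f n)

/-- Denotation `⟦Γ ⊢_λ t : A⟧ : ⟦Γ⟧ → M ⟦A⟧` of a typing derivation. -/
def HasType.denote : {Γ : Ctx} → {t : Tm} → {A : Ty} →
    HasType Γ t A → Ctx.denote Γ → Option (Ty.denote A)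
  | _, _, _, .var v, G => v.denote G
  | _, _, _, .nil, _ => some ()
  | _, _, _, .err, _ => none
  | _, _, _, .lam e, G => some fun a => e.denote (some a, G)
  | _, _, _, .app f a, G => (f.denote G).bind fun f' => (a.denote G).bind f'
  | _, _, _, .pair l r, G => (l.denote G).bind fun l' => (r.denote G).map fun r' => (l', r')
  | _, _, _, .letPair e e', G => (e.denote G).bind fun p => e'.denote (some p.2, (some p.1, G))
  | _, _, _, .inl e, G => (e.denote G).map Sum.inl
  | _, _, _, .inr e, G => (e.denote G).map Sum.inr
  | _, _, _, .cases e l r, G => (e.denote G).bind fun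
      | Sum.inl a => l.denote (some a, G)
      | Sum.inr b => r.denote (some b, G)
  | _, _, _, .zero, _ => some Nat.zero
  | _, _, _, .succ, _ => some fun n => some (Nat.succ n)
  | _, _, _, .natrec e z s, G => (e.denote G).bind fun n =>
      iterOpt (z.denote G) (fun c => c.bind fun c' => s.denote (some c', G)) n
  | _, _, _, .letIn a e, G => (a.denote G).bind fun a' => e.denote (some a', G)

/-- Denotation `⟦Γ ⊢_λ σ : Δ⟧ : ⟦Δ⟧ → ⟦Γ⟧` of a substitution, defined
componentwise from the term semantics. -/
def substDenote {σ : ℕ → Tm} {Δ : Ctx} :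
    (Γ : Ctx) → SubstWf σ Γ Δ → Ctx.denote Δ → Ctx.denote Γ
  | [], _, _ => ()
  | A :: Γ, W, D =>
      ((W 0 A .head).denote D, substDenote Γ (fun n B h => W (n+1) B (.tail h)) D)

end Stlc
namespace Ert

/-- Erasure of λ_ert types (and propositions, which erase to the unit type)
to λ_stlc types. -/
def eraseTy : Tm → Stlc.Ty
  | .unit => .unit
  | .nat => .nat
  | .pi A B => .arrow (eraseTy A) (eraseTy B)
  | .sigma A B => .prod (eraseTy A) (eraseTy B)
  | .coprod A B => .sum (eraseTy A) (eraseTy B)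
  | .set A _ => eraseTy A
  | .pre _ A => .arrow .unit (eraseTy A)
  | .inter _ B => .arrow .unit (eraseTy B)
  | .union _ B => eraseTy B
  | _ => .unit   -- propositions (and terms/proofs, which never occur in type position)

/-- Substitution replacing a bound propositional/ghost variable (index 0) by `()`. -/
def sub0nil : ℕ → Stlc.Tm
  | 0 => .nil
  | n+1 => .var n

/-- Substitution replacing a bound propositional/ghost variable (index 1) by `()`. -/
def sub1nil : ℕ → Stlc.Tm
  | 0 => .var 0
  | 1 => .nil
  | n+2 => .var (n+1)

/-- Erasure of λ_ert terms to λ_stlc terms: ghost arguments and proofs erase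
to units, `absurd` erases to `error`, everything else is homomorphic. -/
def eraseTm : Tm → Stlc.Tm
  | .var n => .var n
  | .nil => .nil
  | .lam A e => .lam (eraseTy A) (eraseTm e)
  | .app f a => .app (eraseTm f) (eraseTm a)
  | .pair a b => .pair (eraseTm a) (eraseTm b)
  | .letPair _ e e' => .letPair (eraseTm e) (eraseTm e')
  | .inl a => .inl (eraseTm a)
  | .inr a => .inr (eraseTm a)
  | .cases _ e l r => .cases (eraseTm e) (eraseTm l) (eraseTm r)
  | .lamPr _ e => .lam .unit (eraseTm e)
  | .appPr f _ => .app (eraseTm f) .nil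
  | .elem a _ => eraseTm a
  | .letSet _ e e' => .letIn (eraseTm e) ((eraseTm e').subst sub0nil)
  | .lamIr _ e => .lam .unit (eraseTm e)
  | .appIr f _ => .app (eraseTm f) .nil
  | .repr _ b => eraseTm b
  | .letRepr _ e e' => .letIn (eraseTm e) ((eraseTm e').subst sub1nil)
  | .zero => .zero
  | .succ => .succ
  | .natrec _ e z s => .natrec (eraseTm e) (eraseTm z) ((eraseTm s).subst sub1nil)
  | .abort _ => .err
  | _ => .nil    -- proofs (and types/propositions, which never occur in term position)

/-- Erasure of hypotheses: ghost and propositional hypotheses erase to `1`. -/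
def eraseHyp : Hyp → Stlc.Ty
  | .tm .comp A => eraseTy A
  | .tm .ghost _ => .unit
  | .pf _ => .unit

/-- Pointwise erasure of contexts. -/
def eraseCtx : Ctx → Stlc.Ctx
  | [] => []
  | H :: Γ => eraseHyp H :: eraseCtx Γ

/-- Pointwise erasure of substitutions: `|σ| x = |σ x|`. -/
def eraseSub (σ : ℕ → Tm) : ℕ → Stlc.Tm := fun n => eraseTm (σ n)

end Ert

namespace Stlc

/-- Weakening a variable by a prefix. -/
def hasVarAppend : ∀ (Ξ : Ctx) {Δ : Ctx} {m : ℕ} {A : Ty},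
    HasVar Δ m A → HasVar (Ξ ++ Δ) (m + Ξ.length) A
  | [], _, _, _, h => h
  | _ :: Ξ, _, _, _, h => .tail (hasVarAppend Ξ h)

def hasVarLt : ∀ (Ξ : Ctx) {Γ Δ : Ctx} {n : ℕ} {A : Ty},
    HasVar (Ξ ++ Γ) n A → n < Ξ.length → HasVar (Ξ ++ Δ) n A := by
  intro Ξ
  induction Ξ with
  | nil => intro Γ Δ n A h hn; exact (Nat.not_lt_zero n hn).elim
  | cons B Ξ ih =>
    intro Γ Δ n A h hn
    cases h with
    | head => exact .head
    | tail h => exact .tail (ih h (Nat.lt_of_succ_lt_succ hn))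

def hasVarGe : ∀ (Ξ : Ctx) {Γ : Ctx} {n : ℕ} {A : Ty},
    HasVar (Ξ ++ Γ) n A → Ξ.length ≤ n → HasVar Γ (n - Ξ.length) A := by
  intro Ξ
  induction Ξ with
  | nil => intro Γ n A h _; exact (Nat.sub_zero n).symm ▸ h
  | cons B Ξ ih =>
    intro Γ n A h hn
    cases h with
    | head => exact (Nat.not_succ_le_zero _ hn).elim
    | tail h =>
      simp only [List.length_cons, Nat.succ_sub_succ]
      exact ih h (Nat.le_of_succ_le_succ hn)

/-- Generic renaming lemma. -/
noncomputable def renameTy {Γ Δ : Ctx} {ρ : ℕ → ℕ}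
    (hρ : ∀ n A, HasVar Γ n A → HasVar Δ (ρ n) A) :
    ∀ {t : Tm} {Ξ : Ctx} {A : Ty}, HasType (Ξ ++ Γ) t A →
      HasType (Ξ ++ Δ)
        (Tm.tmap (fun d n => if n < d then .var n else .var (ρ (n - d) + d)) Ξ.length t) A := by
  intro t
  induction t with
  | var n =>
      intro Ξ A h
      cases h with
      | var hv =>
        simp only [Tm.tmap]
        by_cases hn : n < Ξ.length
        · rw [if_pos hn]; exact .var (hasVarLt Ξ hv hn)
        · rw [if_neg hn]
          exact .var (hasVarAppend Ξ (hρ _ _ (hasVarGe Ξ hv (Nat.le_of_not_lt hn))))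
  | nil => intro Ξ A h; cases h; exact .nil
  | err => intro Ξ A h; cases h; exact .err
  | lam B e ih =>
      intro Ξ A h; cases h with
      | lam he => exact .lam (ih (Ξ := B :: Ξ) he)
  | app f a ihf iha =>
      intro Ξ A h; cases h with
      | app hf ha => exact .app (ihf hf) (iha ha)
  | pair a b iha ihb =>
      intro Ξ A h; cases h with
      | pair ha hb => exact .pair (iha ha) (ihb hb)
  | letPair e e' ihe ihe' =>
      intro Ξ A h; cases h with
      | letPair he he' => exact .letPair (ihe he) (ihe' (Ξ := _ :: _ :: Ξ) he')
  | inl a ih =>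
      intro Ξ A h; cases h with
      | inl ha => exact .inl (ih ha)
  | inr a ih =>
      intro Ξ A h; cases h with
      | inr ha => exact .inr (ih ha)
  | cases e l r ihe ihl ihr =>
      intro Ξ A h; cases h with
      | cases he hl hr =>
          exact .cases (ihe he) (ihl (Ξ := _ :: Ξ) hl) (ihr (Ξ := _ :: Ξ) hr)
  | zero => intro Ξ A h; cases h; exact .zero
  | succ => intro Ξ A h; cases h; exact .succ
  | natrec e z s ihe ihz ihs =>
      intro Ξ A h; cases h with
      | natrec he hz hs => exact .natrec (ihe he) (ihz hz) (ihs (Ξ := _ :: Ξ) hs)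
  | letIn a e iha ihe =>
      intro Ξ A h; cases h with
      | letIn ha he => exact .letIn (iha ha) (ihe (Ξ := _ :: Ξ) he)

/-- Generic substitution lemma. -/
noncomputable def substTy {Γ Δ : Ctx} {σ : ℕ → Tm}
    (hσ : ∀ n A, HasVar Γ n A → HasType Δ (σ n) A) :
    ∀ {t : Tm} {Ξ : Ctx} {A : Ty}, HasType (Ξ ++ Γ) t A →
      HasType (Ξ ++ Δ)
        (Tm.tmap (fun d n => if n < d then .var n else (σ (n - d)).rename (· + d)) Ξ.length t) A := by
  intro t
  induction t with
  | var n =>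
      intro Ξ A h
      cases h with
      | var hv =>
        simp only [Tm.tmap]
        by_cases hn : n < Ξ.length
        · rw [if_pos hn]; exact .var (hasVarLt Ξ hv hn)
        · rw [if_neg hn]
          have h1 : HasType Δ (σ (n - Ξ.length)) A :=
            hσ _ _ (hasVarGe Ξ hv (Nat.le_of_not_lt hn))
          exact renameTy (Γ := Δ) (Δ := Ξ ++ Δ) (ρ := (· + Ξ.length))
            (fun m B hb => hasVarAppend Ξ hb) (Ξ := []) h1
  | nil => intro Ξ A h; cases h; exact .nil
  | err => intro Ξ A h; cases h; exact .err
  | lam B e ih =>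
      intro Ξ A h; cases h with
      | lam he => exact .lam (ih (Ξ := B :: Ξ) he)
  | app f a ihf iha =>
      intro Ξ A h; cases h with
      | app hf ha => exact .app (ihf hf) (iha ha)
  | pair a b iha ihb =>
      intro Ξ A h; cases h with
      | pair ha hb => exact .pair (iha ha) (ihb hb)
  | letPair e e' ihe ihe' =>
      intro Ξ A h; cases h with
      | letPair he he' => exact .letPair (ihe he) (ihe' (Ξ := _ :: _ :: Ξ) he')
  | inl a ih =>
      intro Ξ A h; cases h with
      | inl ha => exact .inl (ih ha)
  | inr a ih =>
      intro Ξ A h; cases h with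
      | inr ha => exact .inr (ih ha)
  | cases e l r ihe ihl ihr =>
      intro Ξ A h; cases h with
      | cases he hl hr =>
          exact .cases (ihe he) (ihl (Ξ := _ :: Ξ) hl) (ihr (Ξ := _ :: Ξ) hr)
  | zero => intro Ξ A h; cases h; exact .zero
  | succ => intro Ξ A h; cases h; exact .succ
  | natrec e z s ihe ihz ihs =>
      intro Ξ A h; cases h with
      | natrec he hz hs => exact .natrec (ihe he) (ihz hz) (ihs (Ξ := _ :: Ξ) hs)
  | letIn a e iha ihe =>
      intro Ξ A h; cases h with
      | letIn ha he => exact .letIn (iha ha) (ihe (Ξ := _ :: Ξ) he)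

noncomputable def substTy0 {Γ Δ : Ctx} {σ : ℕ → Tm}
    (hσ : ∀ n A, HasVar Γ n A → HasType Δ (σ n) A)
    {t : Tm} {A : Ty} (h : HasType Γ t A) : HasType Δ (t.subst σ) A :=
  substTy hσ (Ξ := []) h

end Stlc

namespace Ert

/-- Cut of a unit hypothesis at index 0. -/
noncomputable def cut0 {Δ : Stlc.Ctx} {t : Stlc.Tm} {A : Stlc.Ty}
    (h : Stlc.HasType (.unit :: Δ) t A) : Stlc.HasType Δ (t.subst sub0nil) A := by
  refine Stlc.substTy0 ?_ h
  intro n B hv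
  match n, hv with
  | 0, .head => exact .nil
  | n+1, .tail hv => exact .var hv

/-- Cut of a unit hypothesis at index 1. -/
noncomputable def cut1 {Δ : Stlc.Ctx} {C : Stlc.Ty} {t : Stlc.Tm} {A : Stlc.Ty}
    (h : Stlc.HasType (C :: .unit :: Δ) t A) :
    Stlc.HasType (C :: Δ) (t.subst sub1nil) A := by
  refine Stlc.substTy0 ?_ h
  intro n B hv
  match n, hv with
  | 0, .head => exact .var .head
  | 1, .tail .head => exact .nil
  | n+2, .tail (.tail hv) => exact .var (.tail hv)

theorem eraseTy_pi (A B : Tm) : eraseTy (.pi A B) = .arrow (eraseTy A) (eraseTy B) := rfl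
theorem eraseTy_sigma (A B : Tm) : eraseTy (.sigma A B) = .prod (eraseTy A) (eraseTy B) := rfl
theorem eraseTy_coprod (A B : Tm) : eraseTy (.coprod A B) = .sum (eraseTy A) (eraseTy B) := rfl
theorem eraseTy_set (A φ : Tm) : eraseTy (.set A φ) = eraseTy A := rfl
theorem eraseTy_pre (φ A : Tm) : eraseTy (.pre φ A) = .arrow .unit (eraseTy A) := rfl
theorem eraseTy_inter (A B : Tm) : eraseTy (.inter A B) = .arrow .unit (eraseTy B) := rfl
theorem eraseTy_union (A B : Tm) : eraseTy (.union A B) = eraseTy B := rfl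

theorem eraseTy_tmap {v : ℕ → ℕ → Tm} (hv : ∀ d n, eraseTy (v d n) = .unit)
    (t : Tm) : ∀ d, eraseTy (Tm.tmap v d t) = eraseTy t := by
  induction t <;> intro d <;>
    first
      | exact hv d _
      | rfl
      | (simp only [Tm.tmap, eraseTy_pi, eraseTy_sigma, eraseTy_coprod, eraseTy_set,
          eraseTy_pre, eraseTy_inter, eraseTy_union, *])

theorem eraseTy_rename (t : Tm) (ρ : ℕ → ℕ) : eraseTy (t.rename ρ) = eraseTy t :=
  eraseTy_tmap (by
    intro d n
    show eraseTy (if n < d then Tm.var n else Tm.var (ρ (n - d) + d)) = _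
    split <;> rfl) t 0

theorem eraseTy_subst {σ : ℕ → Tm} (hσ : ∀ n, eraseTy (σ n) = .unit) (t : Tm) :
    eraseTy (t.subst σ) = eraseTy t :=
  eraseTy_tmap (by
    intro d n
    show eraseTy (if n < d then Tm.var n else (σ (n - d)).rename (· + d)) = _
    split
    · rfl
    · rw [eraseTy_rename]; exact hσ _) t 0

theorem eraseTy_substK {w : Tm} (hw : eraseTy w = .unit) (t : Tm) (k : ℕ) :
    eraseTy (t.substK w k) = eraseTy t :=
  eraseTy_subst (fun n => by cases n <;> first | exact hw | rfl) t

theorem eraseTy_subst0 {w : Tm} (hw : eraseTy w = .unit) (t : Tm) :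
    eraseTy (t.subst0 w) = eraseTy t :=
  eraseTy_substK hw t 0

theorem eraseTy_of_tm {Γ : Ctx} {a A : Tm} (h : Judg Γ a (.tm A)) :
    eraseTy a = .unit := by cases h <;> rfl

theorem eraseTy_of_pf {Γ : Ctx} {p φ : Tm} (h : Judg Γ p (.pf φ)) :
    eraseTy p = .unit := by cases h <;> rfl

theorem eraseHyp_wk (H : Hyp) : eraseHyp H.wk = eraseHyp H := by
  cases H with
  | tm k A => cases k <;> simp [Hyp.wk, eraseHyp, Tm.wk0, eraseTy_rename]
  | pf φ => rfl

theorem eraseVar {Γ : Ctx} {n : ℕ} {H : Hyp} (h : HasVar Γ n H) :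
    Nonempty (Stlc.HasVar (eraseCtx Γ) n (eraseHyp H)) := by
  induction h with
  | head => exact ⟨by rw [eraseHyp_wk]; exact .head⟩
  | tail _ ih => obtain ⟨v⟩ := ih; exact ⟨by rw [eraseHyp_wk]; exact .tail v⟩

theorem erasure_aux {Γ : Ctx} {t : Tm} {ann : Annot} (h : Judg Γ t ann) :
    ∀ A, ann = Annot.tm A →
      Nonempty (Stlc.HasType (eraseCtx Γ) (eraseTm t) (eraseTy A)) := by
  induction h <;> intro A' hA <;> try exact (Annot.noConfusion hA : False).elim
  case var hv =>
    cases hA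
    obtain ⟨v⟩ := eraseVar hv
    exact ⟨.var v⟩
  case nil_intro => cases hA; exact ⟨.nil⟩
  case zero => cases hA; exact ⟨.zero⟩
  case succ => cases hA; exact ⟨.succ⟩
  case abort _ _ => cases hA; exact ⟨.err⟩
  case lam _ ih =>
    cases hA
    obtain ⟨d⟩ := ih _ rfl
    exact ⟨.lam d⟩
  case app hf ha ihf iha =>
    cases hA
    obtain ⟨df⟩ := ihf _ rfl
    obtain ⟨da⟩ := iha _ rfl
    refine ⟨?_⟩
    rw [eraseTy_subst0 (eraseTy_of_tm ha)]
    exact .app df da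
  case pair hl hr ihl ihr =>
    cases hA
    obtain ⟨dl⟩ := ihl _ rfl
    obtain ⟨dr⟩ := ihr _ rfl
    rw [eraseTy_subst0 (eraseTy_of_tm hl)] at dr
    exact ⟨.pair dl dr⟩
  case letPair he _ _ ihe _ ihe' =>
    cases hA
    obtain ⟨de⟩ := ihe _ rfl
    obtain ⟨de'⟩ := ihe' _ rfl
    rw [eraseTy_substK (w := .pair (.var 1) (.var 0)) rfl] at de'
    refine ⟨?_⟩
    rw [eraseTy_subst0 (eraseTy_of_tm he)]
    exact .letPair de de'
  case inl _ ih =>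
    cases hA
    obtain ⟨d⟩ := ih _ rfl
    exact ⟨.inl d⟩
  case inr _ ih =>
    cases hA
    obtain ⟨d⟩ := ih _ rfl
    exact ⟨.inr d⟩
  case cases he _ _ _ ihe ihl ihr =>
    cases hA
    obtain ⟨de⟩ := ihe _ rfl
    obtain ⟨dl⟩ := ihl _ rfl
    obtain ⟨dr⟩ := ihr _ rfl
    rw [eraseTy_substK (w := .inl (.var 0)) rfl] at dl
    rw [eraseTy_substK (w := .inr (.var 0)) rfl] at dr
    refine ⟨?_⟩
    rw [eraseTy_subst0 (eraseTy_of_tm he)]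
    exact .cases de dl dr
  case lamPr _ ih =>
    cases hA
    obtain ⟨d⟩ := ih _ rfl
    exact ⟨.lam d⟩
  case appPr hp ihf _ =>
    cases hA
    obtain ⟨df⟩ := ihf _ rfl
    refine ⟨?_⟩
    rw [eraseTy_subst0 (eraseTy_of_pf hp)]
    exact .app df .nil
  case elem iha _ =>
    cases hA
    obtain ⟨d⟩ := iha _ rfl
    exact ⟨d⟩
  case letSet he _ _ ihe _ ihe' =>
    cases hA
    obtain ⟨de⟩ := ihe _ rfl
    obtain ⟨de'⟩ := ihe' _ rfl
    rw [eraseTy_substK (w := .elem (.var 1) (.var 0)) rfl] at de'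
    refine ⟨?_⟩
    rw [eraseTy_subst0 (eraseTy_of_tm he)]
    exact .letIn de (cut0 de')
  case lamIr _ ih =>
    cases hA
    obtain ⟨d⟩ := ih _ rfl
    exact ⟨.lam d⟩
  case appIr ha ihf _ =>
    cases hA
    obtain ⟨df⟩ := ihf _ rfl
    refine ⟨?_⟩
    rw [eraseTy_subst0 (eraseTy_of_tm ha)]
    exact .app df .nil
  case repr ha _ _ ihb =>
    cases hA
    obtain ⟨db⟩ := ihb _ rfl
    rw [eraseTy_subst0 (eraseTy_of_tm ha)] at db
    exact ⟨db⟩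
  case letRepr he _ _ ihe _ ihe' =>
    cases hA
    obtain ⟨de⟩ := ihe _ rfl
    obtain ⟨de'⟩ := ihe' _ rfl
    rw [eraseTy_substK (w := .repr (.var 1) (.var 0)) rfl] at de'
    refine ⟨?_⟩
    rw [eraseTy_subst0 (eraseTy_of_tm he)]
    exact .letIn de (cut1 de')
  case natrec he _ _ _ ihe ihz ihs =>
    cases hA
    obtain ⟨de⟩ := ihe _ rfl
    obtain ⟨dz⟩ := ihz _ rfl
    obtain ⟨ds⟩ := ihs _ rfl
    rw [eraseTy_subst0 (w := .zero) rfl] at dz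
    rw [eraseTy_substK (w := .app .succ (.var 1)) rfl] at ds
    refine ⟨?_⟩
    rw [eraseTy_subst0 (eraseTy_of_tm he)]
    exact .natrec de dz (cut1 ds)

end Ert

namespace Ert

/-- **Lemma (Erasure).** Given a λ_ert derivation `Γ ⊢ a : A`, there is a λ_stlc
derivation `|Γ| ⊢_λ |a| : |A|` of the erased term at the erased type in the erased
context. -/
theorem erasure {Γ : Ctx} {a A : Tm} (h : HasTy Γ a A) :
    Nonempty (Stlc.HasType (eraseCtx Γ) (eraseTm a) (eraseTy A)) :=
  erasure_aux h _ rfl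

end Ert
end

section
/- Corollary (Substitution and Erasure Denotation Commute): Given a λ_ert derivation Γ ⊢ a : A and a strict well-formed λ_ert substitution Γ ⊢ σ : Δ, the λ_stlc denotations of the erasures satisfy ⟦|Γ ⊢ a : A|⟧ ∘ ⟦|Γ ⊢ σ : Δ|⟧ = ⟦|Δ ⊢ [σ]a : [σ]A|⟧ as functions ⟦|Δ|⟧ → M⟦|A|⟧. -/
set_option autoImplicit true

set_option autoImplicit true

set_option maxHeartbeats 1000000

namespace Stlc
namespace Tm

theorem tmap_congr {v w : ℕ → ℕ → Tm} (h : ∀ d n, v d n = w d n) :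
    ∀ (t : Tm) (d : ℕ), tmap v d t = tmap w d t := by
  intro t; induction t <;> intro d <;> simp [tmap, h, *]

theorem tmap_id : ∀ (t : Tm) (d : ℕ), tmap (fun _ n => .var n) d t = t := by
  intro t; induction t <;> intro d <;> simp [tmap, *]

theorem tmap_tmap (v w : ℕ → ℕ → Tm) :
    ∀ (t : Tm) (d : ℕ), tmap v d (tmap w d t) = tmap (fun d n => tmap v d (w d n)) d t := by
  intro t; induction t <;> intro d <;> simp [tmap, *]

theorem tmap_shift (v : ℕ → ℕ → Tm) (k : ℕ) :
    ∀ (t : Tm) (c : ℕ), tmap v (c + k) t = tmap (fun e n => v (e + k) n) c t := by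
  intro t; induction t <;> intro c <;>
    simp [tmap, Nat.add_right_comm c k 1, Nat.add_right_comm c k 2, *]

/-- substitutions/renamings lifted under `k` binders -/
def liftN (s : ℕ → Tm) (k : ℕ) : ℕ → Tm := fun n =>
  if n < k then .var n else (s (n - k)).rename (· + k)

def liftR (ρ : ℕ → ℕ) (k : ℕ) : ℕ → ℕ := fun n =>
  if n < k then n else ρ (n - k) + k

theorem subst_def (t : Tm) (s : ℕ → Tm) :
    t.subst s = t.tmap (fun d n => if n < d then .var n else (s (n - d)).rename (· + d)) 0 := rfl

theorem rename_def (t : Tm) (ρ : ℕ → ℕ) :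
    t.rename ρ = t.tmap (fun d n => if n < d then .var n else .var (ρ (n - d) + d)) 0 := rfl

@[simp] theorem rename_var (n : ℕ) (ρ : ℕ → ℕ) : (Tm.var n).rename ρ = .var (ρ n) := by
  simp [rename, tmap]

theorem rename_congr {ρ ξ : ℕ → ℕ} (h : ∀ n, ρ n = ξ n) (t : Tm) : t.rename ρ = t.rename ξ := by
  rw [rename_def, rename_def]; exact tmap_congr (by intro d n; simp [h]) t 0

theorem rename_id {ρ : ℕ → ℕ} (h : ∀ n, ρ n = n) (t : Tm) : t.rename ρ = t := by
  rw [rename_def]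
  rw [tmap_congr (w := fun _ n => .var n)
    (by intro d n; split <;> simp [h] <;> (try congr 1) <;> omega) t 0]
  exact tmap_id t 0

@[simp] theorem subst_var (n : ℕ) (s : ℕ → Tm) : (Tm.var n).subst s = s n := by
  simp [subst, tmap]; exact rename_id (by omega) _

theorem subst_congr {s s' : ℕ → Tm} (h : ∀ n, s n = s' n) (t : Tm) : t.subst s = t.subst s' := by
  rw [subst_def, subst_def]; exact tmap_congr (by intro d n; simp [h]) t 0

theorem subst_idv (t : Tm) : t.subst (fun n => .var n) = t := by
  rw [subst_def]
  rw [tmap_congr (w := fun _ n => .var n)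
    (by intro d n; split <;> simp <;> (try congr 1) <;> omega) t 0]
  exact tmap_id t 0

theorem ren_ren (t : Tm) (ρ ξ : ℕ → ℕ) :
    (t.rename ρ).rename ξ = t.rename (fun n => ξ (ρ n)) := by
  rw [rename_def, rename_def, rename_def, tmap_tmap]
  apply tmap_congr
  intro d n
  split
  · simp [tmap, *]
  · simp [tmap]

theorem tmap_renameV (ρ : ℕ → ℕ) (k : ℕ) (t : Tm) :
    tmap (fun d n => if n < d then Tm.var n else .var (ρ (n - d) + d)) k t
      = t.rename (liftR ρ k) := by
  have hs := tmap_shift (fun d n => if n < d then Tm.var n else Tm.var (ρ (n - d) + d)) k t 0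
  rw [Nat.zero_add] at hs
  rw [hs, rename_def]
  apply tmap_congr
  intro d n
  by_cases h1 : n < d
  · rw [if_pos (show n < d + k by omega), if_pos h1]
  · by_cases h2 : n < d + k
    · rw [if_pos h2, if_neg h1]
      simp only [liftR]; rw [if_pos (by omega)]; congr 1; omega
    · rw [if_neg h2, if_neg h1]
      simp only [liftR]; rw [if_neg (by omega)]
      congr 1
      rw [show n - (d + k) = n - d - k from by omega]
      omega

theorem tmap_substV (s : ℕ → Tm) (k : ℕ) (t : Tm) :
    tmap (fun d n => if n < d then Tm.var n else (s (n - d)).rename (· + d)) k t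
      = t.subst (liftN s k) := by
  have hs := tmap_shift
    (fun d n => if n < d then Tm.var n else (s (n - d)).rename (· + d)) k t 0
  rw [Nat.zero_add] at hs
  rw [hs, subst_def]
  apply tmap_congr
  intro d n
  by_cases h1 : n < d
  · rw [if_pos (show n < d + k by omega), if_pos h1]
  · by_cases h2 : n < d + k
    · rw [if_pos h2, if_neg h1]
      simp only [liftN]; rw [if_pos (by omega), rename_var]
      congr 1; omega
    · rw [if_neg h2, if_neg h1]
      simp only [liftN]; rw [if_neg (by omega), ren_ren]
      rw [show n - (d + k) = n - d - k from by omega]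
      exact rename_congr (fun m => by omega) _

theorem subst_rename (t : Tm) (ρ : ℕ → ℕ) (s : ℕ → Tm) :
    (t.rename ρ).subst s = t.subst (fun n => s (ρ n)) := by
  rw [rename_def, subst_def, subst_def, tmap_tmap]
  apply tmap_congr
  intro d n
  split
  · simp [tmap, *]
  · simp [tmap]

theorem rename_subst (t : Tm) (s : ℕ → Tm) (ξ : ℕ → ℕ) :
    (t.subst s).rename ξ = t.subst (fun n => (s n).rename ξ) := by
  rw [subst_def, rename_def, subst_def, tmap_tmap]
  apply tmap_congr
  intro d n
  split
  · simp [tmap, *]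
  · rw [tmap_renameV, ren_ren, ren_ren]
    apply rename_congr
    intro m; simp [liftR]

theorem subst_subst (t : Tm) (s₁ s₂ : ℕ → Tm) :
    (t.subst s₁).subst s₂ = t.subst (fun n => (s₁ n).subst s₂) := by
  rw [subst_def (t := t.subst s₁), subst_def (t := t), subst_def (t := t), tmap_tmap]
  apply tmap_congr
  intro d n
  split
  · simp [tmap, *]
  · rw [tmap_substV, subst_rename, rename_subst]
    exact subst_congr (fun m => by simp [liftN]) _

end Tm
end Stlc

namespace Stlc
namespace Tm

theorem liftR_zero (ρ : ℕ → ℕ) : liftR ρ 0 = ρ := funext fun n => by simp [liftR]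

theorem liftR_liftR (ρ : ℕ → ℕ) (d k : ℕ) :
    liftR (liftR ρ d) k = liftR ρ (d + k) := by
  funext n; simp only [liftR]
  by_cases h1 : n < k
  · rw [if_pos h1, if_pos (by omega)]
  · rw [if_neg h1]
    by_cases h2 : n - k < d
    · rw [if_pos h2, if_pos (by omega)]; omega
    · rw [if_neg h2, if_neg (by omega)]
      rw [show n - (d + k) = n - k - d from by omega]; omega

theorem liftN_zero (s : ℕ → Tm) : liftN s 0 = s := by
  funext n; simp only [liftN, if_neg (by omega : ¬ n < 0), Nat.sub_zero]
  exact rename_id (fun _ => by omega) _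

-- rename unfolding lemmas
theorem rename_nil (ρ : ℕ → ℕ) : (Tm.nil).rename ρ = .nil := rfl
theorem rename_err (ρ : ℕ → ℕ) : (Tm.err).rename ρ = .err := rfl
theorem rename_zero (ρ : ℕ → ℕ) : (Tm.zero).rename ρ = .zero := rfl
theorem rename_succ (ρ : ℕ → ℕ) : (Tm.succ).rename ρ = .succ := rfl
theorem rename_lam (ρ : ℕ → ℕ) (A : Ty) (e : Tm) :
    (Tm.lam A e).rename ρ = .lam A (e.rename (liftR ρ 1)) := by
  rw [rename_def]; simp only [tmap, tmap_renameV, Nat.zero_add, liftR_zero]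
theorem rename_app (ρ : ℕ → ℕ) (f a : Tm) :
    (Tm.app f a).rename ρ = .app (f.rename ρ) (a.rename ρ) := by
  rw [rename_def]; simp only [tmap, tmap_renameV, Nat.zero_add, liftR_zero]
theorem rename_pair (ρ : ℕ → ℕ) (a b : Tm) :
    (Tm.pair a b).rename ρ = .pair (a.rename ρ) (b.rename ρ) := by
  rw [rename_def]; simp only [tmap, tmap_renameV, Nat.zero_add, liftR_zero]
theorem rename_letPair (ρ : ℕ → ℕ) (e e' : Tm) :
    (Tm.letPair e e').rename ρ = .letPair (e.rename ρ) (e'.rename (liftR ρ 2)) := by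
  rw [rename_def]; simp only [tmap, tmap_renameV, Nat.zero_add, liftR_zero]
theorem rename_inl (ρ : ℕ → ℕ) (a : Tm) : (Tm.inl a).rename ρ = .inl (a.rename ρ) := by
  rw [rename_def]; simp only [tmap, tmap_renameV, Nat.zero_add, liftR_zero]
theorem rename_inr (ρ : ℕ → ℕ) (a : Tm) : (Tm.inr a).rename ρ = .inr (a.rename ρ) := by
  rw [rename_def]; simp only [tmap, tmap_renameV, Nat.zero_add, liftR_zero]
theorem rename_cases (ρ : ℕ → ℕ) (e l r : Tm) :
    (Tm.cases e l r).rename ρ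
      = .cases (e.rename ρ) (l.rename (liftR ρ 1)) (r.rename (liftR ρ 1)) := by
  rw [rename_def]; simp only [tmap, tmap_renameV, Nat.zero_add, liftR_zero]
theorem rename_natrec (ρ : ℕ → ℕ) (e z s : Tm) :
    (Tm.natrec e z s).rename ρ
      = .natrec (e.rename ρ) (z.rename ρ) (s.rename (liftR ρ 1)) := by
  rw [rename_def]; simp only [tmap, tmap_renameV, Nat.zero_add, liftR_zero]
theorem rename_letIn (ρ : ℕ → ℕ) (a e : Tm) :
    (Tm.letIn a e).rename ρ = .letIn (a.rename ρ) (e.rename (liftR ρ 1)) := by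
  rw [rename_def]; simp only [tmap, tmap_renameV, Nat.zero_add, liftR_zero]

-- subst unfolding lemmas
theorem subst_nil (s : ℕ → Tm) : (Tm.nil).subst s = .nil := rfl
theorem subst_err (s : ℕ → Tm) : (Tm.err).subst s = .err := rfl
theorem subst_zero (s : ℕ → Tm) : (Tm.zero).subst s = .zero := rfl
theorem subst_succ (s : ℕ → Tm) : (Tm.succ).subst s = .succ := rfl
theorem subst_lam (s : ℕ → Tm) (A : Ty) (e : Tm) :
    (Tm.lam A e).subst s = .lam A (e.subst (liftN s 1)) := by
  rw [subst_def]; simp only [tmap, tmap_substV, Nat.zero_add, liftN_zero]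
theorem subst_app (s : ℕ → Tm) (f a : Tm) :
    (Tm.app f a).subst s = .app (f.subst s) (a.subst s) := by
  rw [subst_def]; simp only [tmap, tmap_substV, Nat.zero_add, liftN_zero]
theorem subst_pair (s : ℕ → Tm) (a b : Tm) :
    (Tm.pair a b).subst s = .pair (a.subst s) (b.subst s) := by
  rw [subst_def]; simp only [tmap, tmap_substV, Nat.zero_add, liftN_zero]
theorem subst_letPair (s : ℕ → Tm) (e e' : Tm) :
    (Tm.letPair e e').subst s = .letPair (e.subst s) (e'.subst (liftN s 2)) := by
  rw [subst_def]; simp only [tmap, tmap_substV, Nat.zero_add, liftN_zero]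
theorem subst_inl (s : ℕ → Tm) (a : Tm) : (Tm.inl a).subst s = .inl (a.subst s) := by
  rw [subst_def]; simp only [tmap, tmap_substV, Nat.zero_add, liftN_zero]
theorem subst_inr (s : ℕ → Tm) (a : Tm) : (Tm.inr a).subst s = .inr (a.subst s) := by
  rw [subst_def]; simp only [tmap, tmap_substV, Nat.zero_add, liftN_zero]
theorem subst_cases (s : ℕ → Tm) (e l r : Tm) :
    (Tm.cases e l r).subst s
      = .cases (e.subst s) (l.subst (liftN s 1)) (r.subst (liftN s 1)) := by
  rw [subst_def]; simp only [tmap, tmap_substV, Nat.zero_add, liftN_zero]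
theorem subst_natrec (s : ℕ → Tm) (e z s' : Tm) :
    (Tm.natrec e z s').subst s
      = .natrec (e.subst s) (z.subst s) (s'.subst (liftN s 1)) := by
  rw [subst_def]; simp only [tmap, tmap_substV, Nat.zero_add, liftN_zero]
theorem subst_letIn (s : ℕ → Tm) (a e : Tm) :
    (Tm.letIn a e).subst s = .letIn (a.subst s) (e.subst (liftN s 1)) := by
  rw [subst_def]; simp only [tmap, tmap_substV, Nat.zero_add, liftN_zero]

end Tm
end Stlc

namespace Ert
namespace Tm

theorem tmap_congr {v w : ℕ → ℕ → Tm} (h : ∀ d n, v d n = w d n) :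
    ∀ (t : Tm) (d : ℕ), tmap v d t = tmap w d t := by
  intro t; induction t <;> intro d <;> simp [tmap, h, *]

theorem tmap_id : ∀ (t : Tm) (d : ℕ), tmap (fun _ n => .var n) d t = t := by
  intro t; induction t <;> intro d <;> simp [tmap, *]

theorem tmap_tmap (v w : ℕ → ℕ → Tm) :
    ∀ (t : Tm) (d : ℕ), tmap v d (tmap w d t) = tmap (fun d n => tmap v d (w d n)) d t := by
  intro t; induction t <;> intro d <;> simp [tmap, *]

theorem tmap_shift (v : ℕ → ℕ → Tm) (k : ℕ) :
    ∀ (t : Tm) (c : ℕ), tmap v (c + k) t = tmap (fun e n => v (e + k) n) c t := by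
  intro t; induction t <;> intro c <;>
    simp [tmap, Nat.add_right_comm c k 1, Nat.add_right_comm c k 2, *]

/-- substitution lifted under `k` binders -/
def liftN (s : ℕ → Tm) (k : ℕ) : ℕ → Tm := fun n =>
  if n < k then .var n else (s (n - k)).rename (· + k)

theorem subst_def (t : Tm) (s : ℕ → Tm) :
    t.subst s = t.tmap (fun d n => if n < d then .var n else (s (n - d)).rename (· + d)) 0 := rfl

theorem rename_def (t : Tm) (ρ : ℕ → ℕ) :
    t.rename ρ = t.tmap (fun d n => if n < d then .var n else .var (ρ (n - d) + d)) 0 := rfl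

@[simp] theorem rename_var (n : ℕ) (ρ : ℕ → ℕ) : (Tm.var n).rename ρ = .var (ρ n) := by
  simp [rename, tmap]

theorem rename_congr {ρ ξ : ℕ → ℕ} (h : ∀ n, ρ n = ξ n) (t : Tm) : t.rename ρ = t.rename ξ := by
  rw [rename_def, rename_def]; exact tmap_congr (by intro d n; simp [h]) t 0

theorem rename_id {ρ : ℕ → ℕ} (h : ∀ n, ρ n = n) (t : Tm) : t.rename ρ = t := by
  rw [rename_def]
  rw [tmap_congr (w := fun _ n => .var n)
    (by intro d n; split <;> simp [h] <;> (try congr 1) <;> omega) t 0]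
  exact tmap_id t 0

@[simp] theorem subst_var (n : ℕ) (s : ℕ → Tm) : (Tm.var n).subst s = s n := by
  simp [subst, tmap]; exact rename_id (by omega) _

theorem subst_congr {s s' : ℕ → Tm} (h : ∀ n, s n = s' n) (t : Tm) : t.subst s = t.subst s' := by
  rw [subst_def, subst_def]; exact tmap_congr (by intro d n; simp [h]) t 0

theorem subst_idv (t : Tm) : t.subst (fun n => .var n) = t := by
  rw [subst_def]
  rw [tmap_congr (w := fun _ n => .var n)
    (by intro d n; split <;> simp <;> (try congr 1) <;> omega) t 0]
  exact tmap_id t 0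

theorem ren_ren (t : Tm) (ρ ξ : ℕ → ℕ) :
    (t.rename ρ).rename ξ = t.rename (fun n => ξ (ρ n)) := by
  rw [rename_def, rename_def, rename_def, tmap_tmap]
  apply tmap_congr
  intro d n
  split
  · simp [tmap, *]
  · simp [tmap]

theorem tmap_renameV (ρ : ℕ → ℕ) (k : ℕ) (t : Tm) :
    tmap (fun d n => if n < d then Tm.var n else .var (ρ (n - d) + d)) k t
      = t.rename (Stlc.Tm.liftR ρ k) := by
  have hs := tmap_shift (fun d n => if n < d then Tm.var n else Tm.var (ρ (n - d) + d)) k t 0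
  rw [Nat.zero_add] at hs
  rw [hs, rename_def]
  apply tmap_congr
  intro d n
  by_cases h1 : n < d
  · rw [if_pos (show n < d + k by omega), if_pos h1]
  · by_cases h2 : n < d + k
    · rw [if_pos h2, if_neg h1]
      simp only [Stlc.Tm.liftR]; rw [if_pos (by omega)]; congr 1; omega
    · rw [if_neg h2, if_neg h1]
      simp only [Stlc.Tm.liftR]; rw [if_neg (by omega)]
      congr 1
      rw [show n - (d + k) = n - d - k from by omega]
      omega

theorem tmap_substV (s : ℕ → Tm) (k : ℕ) (t : Tm) :
    tmap (fun d n => if n < d then Tm.var n else (s (n - d)).rename (· + d)) k t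
      = t.subst (liftN s k) := by
  have hs := tmap_shift
    (fun d n => if n < d then Tm.var n else (s (n - d)).rename (· + d)) k t 0
  rw [Nat.zero_add] at hs
  rw [hs, subst_def]
  apply tmap_congr
  intro d n
  by_cases h1 : n < d
  · rw [if_pos (show n < d + k by omega), if_pos h1]
  · by_cases h2 : n < d + k
    · rw [if_pos h2, if_neg h1]
      simp only [liftN]; rw [if_pos (by omega), rename_var]
      congr 1; omega
    · rw [if_neg h2, if_neg h1]
      simp only [liftN]; rw [if_neg (by omega), ren_ren]
      rw [show n - (d + k) = n - d - k from by omega]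
      exact rename_congr (fun m => by omega) _

theorem liftN_zero (s : ℕ → Tm) : liftN s 0 = s := by
  funext n; simp only [liftN, if_neg (by omega : ¬ n < 0), Nat.sub_zero]
  exact rename_id (fun _ => by omega) _

-- subst unfolding lemmas for the computational term formers
theorem subst_nil (s : ℕ → Tm) : (Tm.nil).subst s = .nil := rfl
theorem subst_zero (s : ℕ → Tm) : (Tm.zero).subst s = .zero := rfl
theorem subst_succ (s : ℕ → Tm) : (Tm.succ).subst s = .succ := rfl
theorem subst_lam (s : ℕ → Tm) (A e : Tm) :
    (Tm.lam A e).subst s = .lam (A.subst s) (e.subst (liftN s 1)) := by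
  rw [subst_def]; simp only [tmap, tmap_substV, Nat.zero_add, liftN_zero]
theorem subst_app (s : ℕ → Tm) (f a : Tm) :
    (Tm.app f a).subst s = .app (f.subst s) (a.subst s) := by
  rw [subst_def]; simp only [tmap, tmap_substV, Nat.zero_add, liftN_zero]
theorem subst_pair (s : ℕ → Tm) (a b : Tm) :
    (Tm.pair a b).subst s = .pair (a.subst s) (b.subst s) := by
  rw [subst_def]; simp only [tmap, tmap_substV, Nat.zero_add, liftN_zero]
theorem subst_letPair (s : ℕ → Tm) (C e e' : Tm) :
    (Tm.letPair C e e').subst s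
      = .letPair (C.subst (liftN s 1)) (e.subst s) (e'.subst (liftN s 2)) := by
  rw [subst_def]; simp only [tmap, tmap_substV, Nat.zero_add, liftN_zero]
theorem subst_inl (s : ℕ → Tm) (a : Tm) : (Tm.inl a).subst s = .inl (a.subst s) := by
  rw [subst_def]; simp only [tmap, tmap_substV, Nat.zero_add, liftN_zero]
theorem subst_inr (s : ℕ → Tm) (a : Tm) : (Tm.inr a).subst s = .inr (a.subst s) := by
  rw [subst_def]; simp only [tmap, tmap_substV, Nat.zero_add, liftN_zero]
theorem subst_cases (s : ℕ → Tm) (C e l r : Tm) :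
    (Tm.cases C e l r).subst s
      = .cases (C.subst (liftN s 1)) (e.subst s) (l.subst (liftN s 1)) (r.subst (liftN s 1)) := by
  rw [subst_def]; simp only [tmap, tmap_substV, Nat.zero_add, liftN_zero]
theorem subst_lamPr (s : ℕ → Tm) (φ e : Tm) :
    (Tm.lamPr φ e).subst s = .lamPr (φ.subst s) (e.subst (liftN s 1)) := by
  rw [subst_def]; simp only [tmap, tmap_substV, Nat.zero_add, liftN_zero]
theorem subst_appPr (s : ℕ → Tm) (f p : Tm) :
    (Tm.appPr f p).subst s = .appPr (f.subst s) (p.subst s) := by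
  rw [subst_def]; simp only [tmap, tmap_substV, Nat.zero_add, liftN_zero]
theorem subst_elem (s : ℕ → Tm) (a p : Tm) :
    (Tm.elem a p).subst s = .elem (a.subst s) (p.subst s) := by
  rw [subst_def]; simp only [tmap, tmap_substV, Nat.zero_add, liftN_zero]
theorem subst_letSet (s : ℕ → Tm) (C e e' : Tm) :
    (Tm.letSet C e e').subst s
      = .letSet (C.subst (liftN s 1)) (e.subst s) (e'.subst (liftN s 2)) := by
  rw [subst_def]; simp only [tmap, tmap_substV, Nat.zero_add, liftN_zero]
theorem subst_lamIr (s : ℕ → Tm) (A e : Tm) :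
    (Tm.lamIr A e).subst s = .lamIr (A.subst s) (e.subst (liftN s 1)) := by
  rw [subst_def]; simp only [tmap, tmap_substV, Nat.zero_add, liftN_zero]
theorem subst_appIr (s : ℕ → Tm) (f a : Tm) :
    (Tm.appIr f a).subst s = .appIr (f.subst s) (a.subst s) := by
  rw [subst_def]; simp only [tmap, tmap_substV, Nat.zero_add, liftN_zero]
theorem subst_repr (s : ℕ → Tm) (a b : Tm) :
    (Tm.repr a b).subst s = .repr (a.subst s) (b.subst s) := by
  rw [subst_def]; simp only [tmap, tmap_substV, Nat.zero_add, liftN_zero]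
theorem subst_letRepr (s : ℕ → Tm) (C e e' : Tm) :
    (Tm.letRepr C e e').subst s
      = .letRepr (C.subst (liftN s 1)) (e.subst s) (e'.subst (liftN s 2)) := by
  rw [subst_def]; simp only [tmap, tmap_substV, Nat.zero_add, liftN_zero]
theorem subst_natrec (s : ℕ → Tm) (C e z s' : Tm) :
    (Tm.natrec C e z s').subst s
      = .natrec (C.subst (liftN s 1)) (e.subst s) (z.subst s) (s'.subst (liftN s 2)) := by
  rw [subst_def]; simp only [tmap, tmap_substV, Nat.zero_add, liftN_zero]
theorem subst_abort (s : ℕ → Tm) (p : Tm) : (Tm.abort p).subst s = .abort (p.subst s) := by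
  rw [subst_def]; simp only [tmap, tmap_substV, Nat.zero_add, liftN_zero]

end Tm
end Ert

namespace Ert

theorem SL0 (u : Stlc.Tm) (ρ : ℕ → ℕ) (d : ℕ) :
    (u.rename (Stlc.Tm.liftR ρ (d + 2))).subst sub0nil
      = (u.subst sub0nil).rename (Stlc.Tm.liftR ρ (d + 1)) := by
  rw [Stlc.Tm.subst_rename, Stlc.Tm.rename_subst]
  apply Stlc.Tm.subst_congr
  intro n
  match n with
  | 0 => simp [Stlc.Tm.liftR, sub0nil, Stlc.Tm.rename_nil]
  | (n+1) =>
    by_cases h : n + 1 < d + 2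
    · rw [show Stlc.Tm.liftR ρ (d+2) (n+1) = n+1 from by simp [Stlc.Tm.liftR, h]]
      simp only [sub0nil, Stlc.Tm.rename_var]
      congr 1
      simp only [Stlc.Tm.liftR]; rw [if_pos (by omega)]
    · rw [show Stlc.Tm.liftR ρ (d+2) (n+1) = (ρ (n - (d+1)) + (d+1)) + 1 from by
        simp only [Stlc.Tm.liftR, if_neg h]
        rw [show n + 1 - (d+2) = n - (d+1) from by omega]; omega]
      simp only [sub0nil, Stlc.Tm.rename_var]
      congr 1
      simp only [Stlc.Tm.liftR]
      rw [if_neg (by omega)]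

theorem SL1 (u : Stlc.Tm) (ρ : ℕ → ℕ) (d : ℕ) :
    (u.rename (Stlc.Tm.liftR ρ (d + 2))).subst sub1nil
      = (u.subst sub1nil).rename (Stlc.Tm.liftR ρ (d + 1)) := by
  rw [Stlc.Tm.subst_rename, Stlc.Tm.rename_subst]
  apply Stlc.Tm.subst_congr
  intro n
  match n with
  | 0 => simp [Stlc.Tm.liftR, sub1nil]
  | 1 =>
    rw [show Stlc.Tm.liftR ρ (d+2) 1 = 1 from by simp [Stlc.Tm.liftR]]
    simp [sub1nil, Stlc.Tm.rename_nil]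
  | (n+2) =>
    by_cases h : n + 2 < d + 2
    · rw [show Stlc.Tm.liftR ρ (d+2) (n+2) = n+2 from by simp [Stlc.Tm.liftR, h]]
      simp only [sub1nil, Stlc.Tm.rename_var]
      congr 1
      simp only [Stlc.Tm.liftR]
      rw [if_pos (by omega)]
    · rw [show Stlc.Tm.liftR ρ (d+2) (n+2) = (ρ (n - d) + (d+1)) + 1 from by
        simp only [Stlc.Tm.liftR, if_neg h]
        rw [show n + 2 - (d+2) = n - d from by omega]; omega]
      simp only [sub1nil, Stlc.Tm.rename_var]
      congr 1
      simp only [Stlc.Tm.liftR]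
      rw [if_neg (by omega)]
      rw [show n + 1 - (d + 1) = n - d from by omega]
      rfl

@[simp] theorem erase_var (n : ℕ) : eraseTm (Tm.var n) = .var n := rfl

theorem eraseTy_tmap_s11 (ρ : ℕ → ℕ) : ∀ (t : Tm) (d : ℕ),
    eraseTy (Tm.tmap (fun d n => if n < d then Tm.var n else .var (ρ (n - d) + d)) d t)
      = eraseTy t := by
  intro t
  induction t <;> intro d <;>
    first
      | (simp only [Tm.tmap]; split <;> rfl)
      | simp [Tm.tmap, eraseTy, *]

theorem erase_tmap_ren (ρ : ℕ → ℕ) : ∀ (t : Tm) (d : ℕ),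
    eraseTm (Tm.tmap (fun d n => if n < d then Tm.var n else .var (ρ (n - d) + d)) d t)
      = (eraseTm t).rename (Stlc.Tm.liftR ρ d) := by
  intro t
  induction t <;> intro d <;>
    first
      | (simp only [Tm.tmap, erase_var]
         split <;> simp [eraseTm, Stlc.Tm.liftR, *])
      | simp [Tm.tmap, eraseTm, eraseTy_tmap_s11, Stlc.Tm.rename_nil, Stlc.Tm.rename_err,
          Stlc.Tm.rename_lam, Stlc.Tm.rename_app, Stlc.Tm.rename_pair, Stlc.Tm.rename_letPair,
          Stlc.Tm.rename_inl, Stlc.Tm.rename_inr, Stlc.Tm.rename_cases, Stlc.Tm.rename_natrec,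
          Stlc.Tm.rename_letIn, Stlc.Tm.rename_zero, Stlc.Tm.rename_succ,
          Stlc.Tm.liftR_liftR, SL0, SL1, *]

theorem erase_rename (t : Tm) (ρ : ℕ → ℕ) :
    eraseTm (t.rename ρ) = (eraseTm t).rename ρ := by
  have h := erase_tmap_ren ρ t 0
  rw [Stlc.Tm.liftR_zero] at h
  exact h

end Ert

namespace Stlc

/-- Heterogeneous logical relation on values. -/
def V : (A : Ty) → (B : Ty) → A.denote → B.denote → Prop
  | .unit, .unit, _, _ => True
  | .nat, .nat, m, n => m = n
  | .arrow A B, .arrow A' B', f, g =>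
      ∀ x y, V A A' x y →
        (match f x, g y with
         | none, none => True
         | some b, some b' => V B B' b b'
         | _, _ => False)
  | .prod A B, .prod A' B', p, q => V A A' p.1 q.1 ∧ V B B' p.2 q.2
  | .sum A B, .sum A' B', .inl a, .inl a' => V A A' a a'
  | .sum A B, .sum A' B', .inr b, .inr b' => V B B' b b'
  | _, _, _, _ => False

/-- Heterogeneous logical relation on monadic values. -/
def MRel (A B : Ty) (x : Option A.denote) (y : Option B.denote) : Prop :=
  match x, y with
  | none, none => True
  | some a, some b => V A B a b
  | _, _ => False

theorem V_arrow {A B A' B' : Ty} (f : (Ty.arrow A B).denote) (g : (Ty.arrow A' B').denote) :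
    V (.arrow A B) (.arrow A' B') f g ↔ ∀ x y, V A A' x y → MRel B B' (f x) (g y) :=
  Iff.rfl

@[simp] theorem MRel_none_none {A B : Ty} : MRel A B none none := trivial

@[simp] theorem MRel_some_some {A B : Ty} {a b} :
    MRel A B (some a) (some b) ↔ V A B a b := Iff.rfl

@[simp] theorem MRel_some_none {A B : Ty} {a} : ¬ MRel A B (some a) none := fun h => h

@[simp] theorem MRel_none_some {A B : Ty} {b} : ¬ MRel A B none (some b) := fun h => h

theorem V_eq : ∀ (A : Ty) (x y : A.denote), V A A x y ↔ x = y := by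
  intro A
  induction A with
  | empty => intro x y; exact x.elim
  | unit => intro x y; cases x; cases y; simp [V]; rfl
  | nat => intro x y; exact Iff.rfl
  | arrow A B ihA ihB =>
    intro f g
    rw [V_arrow]
    constructor
    · intro h
      funext x
      have := h x x ((ihA x x).mpr rfl)
      revert this
      cases hf : f x <;> cases hg : g x <;> intro h2 <;> simp [MRel] at h2 <;> try rfl
      rw [(ihB _ _).mp h2]
    · rintro rfl x y hxy
      rw [(ihA _ _).mp hxy]
      cases f y <;> simp [MRel]
      rw [ihB]
  | prod A B ihA ihB =>
    intro x y
    show V A A x.1 y.1 ∧ V B B x.2 y.2 ↔ _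
    rw [ihA, ihB]
    constructor
    · rintro ⟨h1, h2⟩
      cases x; cases y
      cases h1; cases h2; rfl
    · rintro rfl; exact ⟨rfl, rfl⟩
  | sum A B ihA ihB =>
    intro x y
    cases x <;> cases y <;> simp only [V, ihA, ihB]
    · exact ⟨fun h => by cases h; rfl, fun h => by cases h; rfl⟩
    · exact ⟨False.elim, fun h => by cases h⟩
    · exact ⟨False.elim, fun h => by cases h⟩
    · exact ⟨fun h => by cases h; rfl, fun h => by cases h; rfl⟩

theorem MRel_eq {A : Ty} (x y : Option A.denote) : MRel A A x y ↔ x = y := by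
  cases x <;> cases y <;> simp [MRel, V_eq]

theorem V_refl {A : Ty} (x : A.denote) : V A A x x := (V_eq A x x).mpr rfl

theorem MRel_refl {A : Ty} (x : Option A.denote) : MRel A A x x := (MRel_eq x x).mpr rfl

theorem hasVar_rel : ∀ {Γ : Ctx} {n : ℕ} {B B' : Ty}
    (h : HasVar Γ n B) (h' : HasVar Γ n B') (G : Ctx.denote Γ),
    MRel B B' (h.denote G) (h'.denote G) := by
  intro Γ n B B' h
  induction h with
  | head => intro h' G; cases h'; exact MRel_refl _
  | tail h ih =>
    intro h' G
    cases h' with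
    | tail h'' => exact ih h'' G.2

theorem iterOpt_rel {C C' : Ty} {z₁ z₂ f₁ f₂}
    (hz : MRel C C' z₁ z₂) (hf : ∀ x y, MRel C C' x y → MRel C C' (f₁ x) (f₂ y)) :
    ∀ k, MRel C C' (iterOpt z₁ f₁ k) (iterOpt z₂ f₂ k) := by
  intro k; induction k with
  | zero => exact hz
  | succ k ih => exact hf _ _ ih

end Stlc

namespace Stlc

theorem MRel_bind {A A' B B' : Ty} {x : Option A.denote} {y : Option A'.denote}
    {f : A.denote → Option B.denote} {g : A'.denote → Option B'.denote}
    (hxy : MRel A A' x y) (hfg : ∀ a b, V A A' a b → MRel B B' (f a) (g b)) :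
    MRel B B' (x.bind f) (y.bind g) := by
  cases x with
  | none =>
    cases y with
    | none => exact MRel_none_none
    | some b => exact hxy.elim
  | some a =>
    cases y with
    | none => exact hxy.elim
    | some b => exact hfg a b hxy

theorem MRel_map {A A' B B' : Ty} {x : Option A.denote} {y : Option A'.denote}
    {f : A.denote → B.denote} {g : A'.denote → B'.denote}
    (hxy : MRel A A' x y) (hfg : ∀ a b, V A A' a b → V B B' (f a) (g b)) :
    MRel B B' (x.map f) (y.map g) := by
  cases x with
  | none =>
    cases y with
    | none => exact MRel_none_none
    | some b => exact hxy.elim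
  | some a =>
    cases y with
    | none => exact hxy.elim
    | some b => exact hfg a b hxy

theorem envext1 {ρ : ℕ → ℕ} {Γ Δ : Ctx} {G : Ctx.denote Γ} {D : Ctx.denote Δ} {X Y : Ty}
    {x : Option (Ty.denote X)} {y : Option (Ty.denote Y)} (hxy : MRel X Y x y)
    (hv : ∀ n B B' (h : HasVar Γ n B) (h' : HasVar Δ (ρ n) B'),
      MRel B B' (h.denote G) (h'.denote D)) :
    ∀ n B B' (h : HasVar (X::Γ) n B) (h' : HasVar (Y::Δ) (Tm.liftR ρ 1 n) B'),
      MRel B B' (h.denote (x, G)) (h'.denote (y, D)) := by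
  intro n B B' h h'
  match n with
  | 0 =>
    cases h; cases h'; simp only [HasVar.denote]; exact hxy
  | (n+1) =>
    cases h with | tail h =>
    cases h' with | tail h' =>
    simp only [HasVar.denote]
    exact hv n _ _ h h'

theorem envext2 {ρ : ℕ → ℕ} {Γ Δ : Ctx} {G : Ctx.denote Γ} {D : Ctx.denote Δ}
    {X1 Y1 X2 Y2 : Ty}
    {x1 : Option (Ty.denote X1)} {y1 : Option (Ty.denote Y1)}
    {x2 : Option (Ty.denote X2)} {y2 : Option (Ty.denote Y2)}
    (h1 : MRel X1 Y1 x1 y1) (h2 : MRel X2 Y2 x2 y2)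
    (hv : ∀ n B B' (h : HasVar Γ n B) (h' : HasVar Δ (ρ n) B'),
      MRel B B' (h.denote G) (h'.denote D)) :
    ∀ n B B' (h : HasVar (X2::X1::Γ) n B) (h' : HasVar (Y2::Y1::Δ) (Tm.liftR ρ 2 n) B'),
      MRel B B' (h.denote (x2, (x1, G))) (h'.denote (y2, (y1, D))) := by
  intro n B B' h h'
  match n with
  | 0 =>
    cases h; cases h'; simp only [HasVar.denote]; exact h2
  | 1 =>
    cases h with | tail h =>
    cases h' with | tail h' =>
    cases h; cases h'; simp only [HasVar.denote]; exact h1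
  | (n+2) =>
    cases h with | tail h =>
    cases h with | tail h =>
    cases h' with | tail h' =>
    cases h' with | tail h' =>
    simp only [HasVar.denote]
    exact hv n _ _ h h'

theorem ren_rel : ∀ (u : Tm) (ρ : ℕ → ℕ) {Γ Δ : Ctx} {C C' : Ty}
    (d : HasType Γ u C) (d' : HasType Δ (u.rename ρ) C')
    (G : Ctx.denote Γ) (D : Ctx.denote Δ),
    (∀ n B B' (h : HasVar Γ n B) (h' : HasVar Δ (ρ n) B'),
      MRel B B' (h.denote G) (h'.denote D)) →
    MRel C C' (d.denote G) (d'.denote D) := by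
  intro u
  induction u with
  | var n =>
    intro ρ Γ Δ C C' d d' G D hv
    revert d'; rw [Tm.rename_var]; intro d'
    cases d with | var h =>
    cases d' with | var h' =>
    simp only [HasType.denote]
    exact hv n C C' h h'
  | nil =>
    intro ρ Γ Δ C C' d d' G D hv
    revert d'; rw [Tm.rename_nil]; intro d'
    cases d; cases d'; simp only [HasType.denote]; exact MRel_refl _
  | err =>
    intro ρ Γ Δ C C' d d' G D hv
    revert d'; rw [Tm.rename_err]; intro d'
    cases d; cases d'; simp only [HasType.denote]; exact MRel_none_none
  | lam A e ih =>
    intro ρ Γ Δ C C' d d' G D hv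
    revert d'; rw [Tm.rename_lam]; intro d'
    cases d with | lam db =>
    cases d' with | lam db' =>
    simp only [HasType.denote]
    apply MRel_some_some.mpr; apply (V_arrow _ _).mpr
    intro x y hxy
    exact ih (Tm.liftR ρ 1) db db' (some x, G) (some y, D) (envext1 (MRel_some_some.mpr hxy) hv)
  | app f a ihf iha =>
    intro ρ Γ Δ C C' d d' G D hv
    revert d'; rw [Tm.rename_app]; intro d'
    cases d with | app df da =>
    cases d' with | app df' da' =>
    simp only [HasType.denote]
    exact MRel_bind (ihf ρ df df' G D hv) fun F F' hFF =>
      MRel_bind (iha ρ da da' G D hv) fun x y hxy => hFF x y hxy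
  | pair a b iha ihb =>
    intro ρ Γ Δ C C' d d' G D hv
    revert d'; rw [Tm.rename_pair]; intro d'
    cases d with | pair dl dr =>
    cases d' with | pair dl' dr' =>
    simp only [HasType.denote]
    exact MRel_bind (iha ρ dl dl' G D hv) fun x y hxy =>
      MRel_map (ihb ρ dr dr' G D hv) fun u v huv => ⟨hxy, huv⟩
  | letPair e e' ihe ihe' =>
    intro ρ Γ Δ C C' d d' G D hv
    revert d'; rw [Tm.rename_letPair]; intro d'
    cases d with | letPair de db =>
    cases d' with | letPair de' db' =>
    simp only [HasType.denote]
    refine MRel_bind (ihe ρ de de' G D hv) fun p q hpq => ?_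
    obtain ⟨hp1, hp2⟩ := hpq
    exact ihe' (Tm.liftR ρ 2) db db' _ _ (envext2 (MRel_some_some.mpr hp1) (MRel_some_some.mpr hp2) hv)
  | inl a ih =>
    intro ρ Γ Δ C C' d d' G D hv
    revert d'; rw [Tm.rename_inl]; intro d'
    cases d with | inl da =>
    cases d' with | inl da' =>
    simp only [HasType.denote]
    exact MRel_map (ih ρ da da' G D hv) fun x y hxy => hxy
  | inr a ih =>
    intro ρ Γ Δ C C' d d' G D hv
    revert d'; rw [Tm.rename_inr]; intro d'
    cases d with | inr da =>
    cases d' with | inr da' =>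
    simp only [HasType.denote]
    exact MRel_map (ih ρ da da' G D hv) fun x y hxy => hxy
  | cases e l r ihe ihl ihr =>
    intro ρ Γ Δ C C' d d' G D hv
    revert d'; rw [Tm.rename_cases]; intro d'
    cases d with | cases de dl dr =>
    cases d' with | cases de' dl' dr' =>
    simp only [HasType.denote]
    refine MRel_bind (ihe ρ de de' G D hv) fun v w hvw => ?_
    cases v with
    | inl x =>
      cases w with
      | inl y => exact ihl (Tm.liftR ρ 1) dl dl' _ _ (envext1 (MRel_some_some.mpr hvw) hv)
      | inr y => exact hvw.elim
    | inr x =>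
      cases w with
      | inl y => exact hvw.elim
      | inr y => exact ihr (Tm.liftR ρ 1) dr dr' _ _ (envext1 (MRel_some_some.mpr hvw) hv)
  | zero =>
    intro ρ Γ Δ C C' d d' G D hv
    revert d'; rw [Tm.rename_zero]; intro d'
    cases d; cases d'; simp only [HasType.denote]; exact MRel_refl _
  | succ =>
    intro ρ Γ Δ C C' d d' G D hv
    revert d'; rw [Tm.rename_succ]; intro d'
    cases d; cases d'; simp only [HasType.denote]; exact MRel_refl _
  | natrec e z s ihe ihz ihs =>
    intro ρ Γ Δ C C' d d' G D hv
    revert d'; rw [Tm.rename_natrec]; intro d'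
    cases d with | natrec de dz ds =>
    cases d' with | natrec de' dz' ds' =>
    simp only [HasType.denote]
    refine MRel_bind (ihe ρ de de' G D hv) fun n m hnm => ?_
    have hnm' : n = m := hnm
    subst hnm'
    exact iterOpt_rel (ihz ρ dz dz' G D hv)
      (fun c c' hcc => MRel_bind hcc fun v w hvw =>
        ihs (Tm.liftR ρ 1) ds ds' _ _ (envext1 (MRel_some_some.mpr hvw) hv)) n
  | letIn a e iha ihe =>
    intro ρ Γ Δ C C' d d' G D hv
    revert d'; rw [Tm.rename_letIn]; intro d'
    cases d with | letIn da de =>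
    cases d' with | letIn da' de' =>
    simp only [HasType.denote]
    exact MRel_bind (iha ρ da da' G D hv) fun v w hvw =>
      ihe (Tm.liftR ρ 1) de de' _ _ (envext1 (MRel_some_some.mpr hvw) hv)

end Stlc

namespace Stlc

def compat_lift1 {ρ : ℕ → ℕ} {Γ Δ : Ctx} {X : Ty}
    (hv : ∀ n B, HasVar Δ (ρ n) B → HasVar Γ n B) :
    ∀ n B, HasVar (X::Δ) (Tm.liftR ρ 1 n) B → HasVar (X::Γ) n B := by
  intro n B h
  match n with
  | 0 => cases h; exact .head
  | (n+1) =>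
    cases h with | tail h => exact .tail (hv n B h)

def compat_lift2 {ρ : ℕ → ℕ} {Γ Δ : Ctx} {X1 X2 : Ty}
    (hv : ∀ n B, HasVar Δ (ρ n) B → HasVar Γ n B) :
    ∀ n B, HasVar (X2::X1::Δ) (Tm.liftR ρ 2 n) B → HasVar (X2::X1::Γ) n B := by
  intro n B h
  match n with
  | 0 => cases h; exact .head
  | 1 =>
    cases h with | tail h => cases h; exact .tail .head
  | (n+2) =>
    cases h with | tail h =>
    cases h with | tail h =>
    exact .tail (.tail (hv n B h))

noncomputable def strengthen : ∀ (u : Tm) {ρ : ℕ → ℕ} {Γ Δ : Ctx} {C : Ty},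
    HasType Δ (u.rename ρ) C → (∀ n B, HasVar Δ (ρ n) B → HasVar Γ n B) →
    HasType Γ u C := by
  intro u
  induction u with
  | var n =>
    intro ρ Γ Δ C d hv
    revert d; rw [Tm.rename_var]; intro d
    cases d with | var h => exact .var (hv n C h)
  | nil =>
    intro ρ Γ Δ C d hv
    revert d; rw [Tm.rename_nil]; intro d
    cases d; exact .nil
  | err =>
    intro ρ Γ Δ C d hv
    revert d; rw [Tm.rename_err]; intro d
    cases d; exact .err
  | lam A e ih =>
    intro ρ Γ Δ C d hv
    revert d; rw [Tm.rename_lam]; intro d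
    cases d with | lam db => exact .lam (ih db (compat_lift1 hv))
  | app f a ihf iha =>
    intro ρ Γ Δ C d hv
    revert d; rw [Tm.rename_app]; intro d
    cases d with | app df da => exact .app (ihf df hv) (iha da hv)
  | pair a b iha ihb =>
    intro ρ Γ Δ C d hv
    revert d; rw [Tm.rename_pair]; intro d
    cases d with | pair dl dr => exact .pair (iha dl hv) (ihb dr hv)
  | letPair e e' ihe ihe' =>
    intro ρ Γ Δ C d hv
    revert d; rw [Tm.rename_letPair]; intro d
    cases d with | letPair de db => exact .letPair (ihe de hv) (ihe' db (compat_lift2 hv))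
  | inl a ih =>
    intro ρ Γ Δ C d hv
    revert d; rw [Tm.rename_inl]; intro d
    cases d with | inl da => exact .inl (ih da hv)
  | inr a ih =>
    intro ρ Γ Δ C d hv
    revert d; rw [Tm.rename_inr]; intro d
    cases d with | inr da => exact .inr (ih da hv)
  | cases e l r ihe ihl ihr =>
    intro ρ Γ Δ C d hv
    revert d; rw [Tm.rename_cases]; intro d
    cases d with | cases de dl dr =>
      exact .cases (ihe de hv) (ihl dl (compat_lift1 hv)) (ihr dr (compat_lift1 hv))
  | zero =>
    intro ρ Γ Δ C d hv
    revert d; rw [Tm.rename_zero]; intro d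
    cases d; exact .zero
  | succ =>
    intro ρ Γ Δ C d hv
    revert d; rw [Tm.rename_succ]; intro d
    cases d; exact .succ
  | natrec e z s ihe ihz ihs =>
    intro ρ Γ Δ C d hv
    revert d; rw [Tm.rename_natrec]; intro d
    cases d with | natrec de dz ds =>
      exact .natrec (ihe de hv) (ihz dz hv) (ihs ds (compat_lift1 hv))
  | letIn a e iha ihe =>
    intro ρ Γ Δ C d hv
    revert d; rw [Tm.rename_letIn]; intro d
    cases d with | letIn da de => exact .letIn (iha da hv) (ihe de (compat_lift1 hv))

/-- Coherence: any two derivations of the same term in the same context have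
related denotations. -/
theorem coh {Γ : Ctx} {u : Tm} {B B' : Ty}
    (d1 : HasType Γ u B) (d2 : HasType Γ u B') (G : Ctx.denote Γ) :
    MRel B B' (d1.denote G) (d2.denote G) := by
  have key : ∀ (u u' : Tm), u' = u.rename (fun x => x) →
      ∀ (d1 : HasType Γ u B) (d2 : HasType Γ u' B'),
      MRel B B' (d1.denote G) (d2.denote G) := by
    intro u u' e d1 d2
    subst e
    exact ren_rel u (fun x => x) d1 d2 G G (fun n B B' h h' => hasVar_rel h h' G)
  exact key u u ((Tm.rename_id (fun _ => rfl) u).symm) d1 d2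

theorem ren_succ_denote {Γ : Ctx} {X : Ty} {u : Tm} {B : Ty}
    (e : HasType (X::Γ) (u.rename (· + 1)) B) :
    ∃ e₀ : HasType Γ u B, ∀ (x : Option (Ty.denote X)) (G : Ctx.denote Γ),
      e.denote (x, G) = e₀.denote G := by
  have compat : ∀ n B, HasVar (X::Γ) (n + 1) B → HasVar Γ n B := by
    intro n B h; cases h with | tail h => exact h
  refine ⟨strengthen u e compat, ?_⟩
  intro x G
  have h := ren_rel u (· + 1) (strengthen u e compat) e G (x, G) ?_
  · exact ((MRel_eq _ _).mp h).symm
  · intro n B B' h h'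
    cases h' with | tail h' => exact hasVar_rel h h' G

theorem substDenote_lookup : ∀ {Γ : Ctx} {n : ℕ} {B : Ty} (h : HasVar Γ n B)
    {σ : ℕ → Tm} {Δ : Ctx} (W : SubstWf σ Γ Δ) (D : Ctx.denote Δ),
    h.denote (substDenote Γ W D) = (W n B h).denote D := by
  intro Γ n B h
  induction h with
  | head => intro σ Δ W D; rfl
  | tail h ih =>
    intro σ Δ W D
    exact ih (fun n B hh => W _ _ (.tail hh)) D

end Stlc

namespace Ert

open Stlc (MRel V)

theorem term_shift1 (w : Stlc.Tm) (s : ℕ → Stlc.Tm) :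
    (w.rename (· + 1)).subst (Stlc.Tm.liftN s 1) = (w.subst s).rename (· + 1) := by
  rw [Stlc.Tm.subst_rename, Stlc.Tm.rename_subst]
  exact Stlc.Tm.subst_congr (fun m => by simp [Stlc.Tm.liftN]) w

theorem term_shift2 (w : Stlc.Tm) (s : ℕ → Stlc.Tm) :
    (w.rename (· + 2)).subst (Stlc.Tm.liftN s 2) = (w.subst s).rename (· + 2) := by
  rw [Stlc.Tm.subst_rename, Stlc.Tm.rename_subst]
  exact Stlc.Tm.subst_congr (fun m => by simp [Stlc.Tm.liftN]) w

theorem term_shift0nil (w : Stlc.Tm) (s : ℕ → Stlc.Tm) :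
    (w.rename (· + 2)).subst (fun m => (sub0nil m).subst (Stlc.Tm.liftN s 1))
      = (w.subst s).rename (· + 1) := by
  rw [Stlc.Tm.subst_rename, Stlc.Tm.rename_subst]
  refine Stlc.Tm.subst_congr (fun m => ?_) w
  show (sub0nil (m + 2)).subst (Stlc.Tm.liftN s 1) = _
  rw [show sub0nil (m + 2) = .var (m + 1) from rfl, Stlc.Tm.subst_var]
  simp [Stlc.Tm.liftN]

theorem term_shift1nil (w : Stlc.Tm) (s : ℕ → Stlc.Tm) :
    (w.rename (· + 2)).subst (fun m => (sub1nil m).subst (Stlc.Tm.liftN s 1))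
      = (w.subst s).rename (· + 1) := by
  rw [Stlc.Tm.subst_rename, Stlc.Tm.rename_subst]
  refine Stlc.Tm.subst_congr (fun m => ?_) w
  show (sub1nil (m + 2)).subst (Stlc.Tm.liftN s 1) = _
  rw [show sub1nil (m + 2) = .var (m + 1) from rfl, Stlc.Tm.subst_var]
  simp [Stlc.Tm.liftN]

theorem ren2_denote {Γ : Stlc.Ctx} {X1 X2 : Stlc.Ty} {u : Stlc.Tm} {B : Stlc.Ty}
    (e : Stlc.HasType (X2::X1::Γ) (u.rename (· + 2)) B) :
    ∃ e₀ : Stlc.HasType Γ u B, ∀ x2 x1 G, e.denote (x2, (x1, G)) = e₀.denote G := by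
  have key : ∀ (u' : Stlc.Tm), u' = (u.rename (· + 1)).rename (· + 1) →
      ∀ (e : Stlc.HasType (X2::X1::Γ) u' B),
      ∃ e₀ : Stlc.HasType Γ u B, ∀ x2 x1 G, e.denote (x2, (x1, G)) = e₀.denote G := by
    intro u' he e; subst he
    obtain ⟨e1, h1⟩ := Stlc.ren_succ_denote e
    obtain ⟨e0, h0⟩ := Stlc.ren_succ_denote e1
    exact ⟨e0, fun x2 x1 G => (h1 x2 (x1, G)).trans (h0 x1 G)⟩
  exact key _ (by rw [Stlc.Tm.ren_ren]) e

/-- Relatedness of a pair of (Ert substitution, Stlc substitution) pairs. -/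
def REL (σ τ : ℕ → Tm) (s t : ℕ → Stlc.Tm) (Γ Δ : Stlc.Ctx)
    (G : Stlc.Ctx.denote Γ) (D : Stlc.Ctx.denote Δ) : Prop :=
  ∀ n (B B' : Stlc.Ty)
    (e1 : Stlc.HasType Γ ((eraseTm (σ n)).subst s) B)
    (e2 : Stlc.HasType Δ ((eraseTm (τ n)).subst t) B'),
    Stlc.MRel B B' (e1.denote G) (e2.denote D)

theorem nil_rel {Γ Δ : Stlc.Ctx} {C C' : Stlc.Ty}
    (d : Stlc.HasType Γ .nil C) (d' : Stlc.HasType Δ .nil C')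
    (G : Stlc.Ctx.denote Γ) (D : Stlc.Ctx.denote Δ) :
    Stlc.MRel C C' (d.denote G) (d'.denote D) := by
  cases d; cases d'; simp only [Stlc.HasType.denote]; exact Stlc.MRel_refl _

theorem var0_rel {Γ Δ : Stlc.Ctx} {X Y C C' : Stlc.Ty}
    {x : Option (Stlc.Ty.denote X)} {y : Option (Stlc.Ty.denote Y)}
    (hxy : Stlc.MRel X Y x y)
    (d : Stlc.HasType (X::Γ) (.var 0) C) (d' : Stlc.HasType (Y::Δ) (.var 0) C')
    (G : Stlc.Ctx.denote Γ) (D : Stlc.Ctx.denote Δ) :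
    Stlc.MRel C C' (d.denote (x, G)) (d'.denote (y, D)) := by
  cases d with | var h =>
  cases d' with | var h' =>
  cases h; cases h'
  simp only [Stlc.HasType.denote, Stlc.HasVar.denote]
  exact hxy

theorem var1_rel {Γ Δ : Stlc.Ctx} {X1 Y1 X2 Y2 C C' : Stlc.Ty}
    {x1 : Option (Stlc.Ty.denote X1)} {y1 : Option (Stlc.Ty.denote Y1)}
    {x2 : Option (Stlc.Ty.denote X2)} {y2 : Option (Stlc.Ty.denote Y2)}
    (hxy : Stlc.MRel X1 Y1 x1 y1)
    (d : Stlc.HasType (X2::X1::Γ) (.var 1) C) (d' : Stlc.HasType (Y2::Y1::Δ) (.var 1) C')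
    (G : Stlc.Ctx.denote Γ) (D : Stlc.Ctx.denote Δ) :
    Stlc.MRel C C' (d.denote (x2, (x1, G))) (d'.denote (y2, (y1, D))) := by
  cases d with | var h =>
  cases d' with | var h' =>
  cases h with | tail h =>
  cases h' with | tail h' =>
  cases h; cases h'
  simp only [Stlc.HasType.denote, Stlc.HasVar.denote]
  exact hxy

theorem REL_lift1 {σ τ : ℕ → Tm} {s t : ℕ → Stlc.Tm} {Γ Δ : Stlc.Ctx}
    {G : Stlc.Ctx.denote Γ} {D : Stlc.Ctx.denote Δ}
    (hR : REL σ τ s t Γ Δ G D) {X Y : Stlc.Ty}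
    {x : Option (Stlc.Ty.denote X)} {y : Option (Stlc.Ty.denote Y)}
    (hxy : Stlc.MRel X Y x y) :
    REL (Tm.liftN σ 1) (Tm.liftN τ 1) (Stlc.Tm.liftN s 1) (Stlc.Tm.liftN t 1)
      (X::Γ) (Y::Δ) (x, G) (y, D) := by
  intro n B B' e1 e2
  match n with
  | 0 =>
    have h1 : ∀ (θ : ℕ → Tm) (w : ℕ → Stlc.Tm),
        (eraseTm (Tm.liftN θ 1 0)).subst (Stlc.Tm.liftN w 1) = Stlc.Tm.var 0 := by
      intro θ w
      rw [show Tm.liftN θ 1 0 = Tm.var 0 from by simp [Tm.liftN]]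
      rw [erase_var, Stlc.Tm.subst_var]
      simp [Stlc.Tm.liftN]
    revert e1 e2
    rw [h1 σ s, h1 τ t]
    intro e1 e2
    exact var0_rel hxy e1 e2 G D
  | (n+1) =>
    have h1 : ∀ (θ : ℕ → Tm) (w : ℕ → Stlc.Tm),
        (eraseTm (Tm.liftN θ 1 (n+1))).subst (Stlc.Tm.liftN w 1)
          = ((eraseTm (θ n)).subst w).rename (· + 1) := by
      intro θ w
      rw [show Tm.liftN θ 1 (n+1) = (θ n).rename (· + 1) from by simp [Tm.liftN]]
      rw [erase_rename, term_shift1]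
    revert e1 e2
    rw [h1 σ s, h1 τ t]
    intro e1 e2
    obtain ⟨e1₀, he1⟩ := Stlc.ren_succ_denote e1
    obtain ⟨e2₀, he2⟩ := Stlc.ren_succ_denote e2
    rw [he1 x G, he2 y D]
    exact hR n B B' e1₀ e2₀

theorem REL_lift2 {σ τ : ℕ → Tm} {s t : ℕ → Stlc.Tm} {Γ Δ : Stlc.Ctx}
    {G : Stlc.Ctx.denote Γ} {D : Stlc.Ctx.denote Δ}
    (hR : REL σ τ s t Γ Δ G D) {X1 Y1 X2 Y2 : Stlc.Ty}
    {x1 : Option (Stlc.Ty.denote X1)} {y1 : Option (Stlc.Ty.denote Y1)}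
    {x2 : Option (Stlc.Ty.denote X2)} {y2 : Option (Stlc.Ty.denote Y2)}
    (h1 : Stlc.MRel X1 Y1 x1 y1) (h2 : Stlc.MRel X2 Y2 x2 y2) :
    REL (Tm.liftN σ 2) (Tm.liftN τ 2) (Stlc.Tm.liftN s 2) (Stlc.Tm.liftN t 2)
      (X2::X1::Γ) (Y2::Y1::Δ) (x2, (x1, G)) (y2, (y1, D)) := by
  intro n B B' e1 e2
  match n with
  | 0 =>
    have hh : ∀ (θ : ℕ → Tm) (w : ℕ → Stlc.Tm),
        (eraseTm (Tm.liftN θ 2 0)).subst (Stlc.Tm.liftN w 2) = Stlc.Tm.var 0 := by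
      intro θ w
      rw [show Tm.liftN θ 2 0 = Tm.var 0 from by simp [Tm.liftN]]
      rw [erase_var, Stlc.Tm.subst_var]
      simp [Stlc.Tm.liftN]
    revert e1 e2
    rw [hh σ s, hh τ t]
    intro e1 e2
    exact var0_rel h2 e1 e2 _ _
  | 1 =>
    have hh : ∀ (θ : ℕ → Tm) (w : ℕ → Stlc.Tm),
        (eraseTm (Tm.liftN θ 2 1)).subst (Stlc.Tm.liftN w 2) = Stlc.Tm.var 1 := by
      intro θ w
      rw [show Tm.liftN θ 2 1 = Tm.var 1 from by simp [Tm.liftN]]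
      rw [erase_var, Stlc.Tm.subst_var]
      simp [Stlc.Tm.liftN]
    revert e1 e2
    rw [hh σ s, hh τ t]
    intro e1 e2
    exact var1_rel h1 e1 e2 _ _
  | (n+2) =>
    have hh : ∀ (θ : ℕ → Tm) (w : ℕ → Stlc.Tm),
        (eraseTm (Tm.liftN θ 2 (n+2))).subst (Stlc.Tm.liftN w 2)
          = ((eraseTm (θ n)).subst w).rename (· + 2) := by
      intro θ w
      rw [show Tm.liftN θ 2 (n+2) = (θ n).rename (· + 2) from by simp [Tm.liftN]]
      rw [erase_rename, term_shift2]
    revert e1 e2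
    rw [hh σ s, hh τ t]
    intro e1 e2
    obtain ⟨e1₀, he1⟩ := ren2_denote e1
    obtain ⟨e2₀, he2⟩ := ren2_denote e2
    rw [he1 x2 x1 G, he2 y2 y1 D]
    exact hR n B B' e1₀ e2₀

theorem REL_sub0 {σ τ : ℕ → Tm} {s t : ℕ → Stlc.Tm} {Γ Δ : Stlc.Ctx}
    {G : Stlc.Ctx.denote Γ} {D : Stlc.Ctx.denote Δ}
    (hR : REL σ τ s t Γ Δ G D) {X Y : Stlc.Ty}
    {x : Option (Stlc.Ty.denote X)} {y : Option (Stlc.Ty.denote Y)}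
    (hxy : Stlc.MRel X Y x y) :
    REL (Tm.liftN σ 2) (Tm.liftN τ 2)
      (fun m => (sub0nil m).subst (Stlc.Tm.liftN s 1))
      (fun m => (sub0nil m).subst (Stlc.Tm.liftN t 1))
      (X::Γ) (Y::Δ) (x, G) (y, D) := by
  intro n B B' e1 e2
  match n with
  | 0 =>
    have hh : ∀ (θ : ℕ → Tm) (w : ℕ → Stlc.Tm),
        (eraseTm (Tm.liftN θ 2 0)).subst (fun m => (sub0nil m).subst (Stlc.Tm.liftN w 1))
          = Stlc.Tm.nil := by
      intro θ w
      rw [show Tm.liftN θ 2 0 = Tm.var 0 from by simp [Tm.liftN]]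
      rw [erase_var, Stlc.Tm.subst_var]
      rfl
    revert e1 e2
    rw [hh σ s, hh τ t]
    intro e1 e2
    exact nil_rel e1 e2 _ _
  | 1 =>
    have hh : ∀ (θ : ℕ → Tm) (w : ℕ → Stlc.Tm),
        (eraseTm (Tm.liftN θ 2 1)).subst (fun m => (sub0nil m).subst (Stlc.Tm.liftN w 1))
          = Stlc.Tm.var 0 := by
      intro θ w
      rw [show Tm.liftN θ 2 1 = Tm.var 1 from by simp [Tm.liftN]]
      rw [erase_var, Stlc.Tm.subst_var]
      rw [show sub0nil 1 = .var 0 from rfl, Stlc.Tm.subst_var]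
      simp [Stlc.Tm.liftN]
    revert e1 e2
    rw [hh σ s, hh τ t]
    intro e1 e2
    exact var0_rel hxy e1 e2 _ _
  | (n+2) =>
    have hh : ∀ (θ : ℕ → Tm) (w : ℕ → Stlc.Tm),
        (eraseTm (Tm.liftN θ 2 (n+2))).subst (fun m => (sub0nil m).subst (Stlc.Tm.liftN w 1))
          = ((eraseTm (θ n)).subst w).rename (· + 1) := by
      intro θ w
      rw [show Tm.liftN θ 2 (n+2) = (θ n).rename (· + 2) from by simp [Tm.liftN]]
      rw [erase_rename, term_shift0nil]
    revert e1 e2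
    rw [hh σ s, hh τ t]
    intro e1 e2
    obtain ⟨e1₀, he1⟩ := Stlc.ren_succ_denote e1
    obtain ⟨e2₀, he2⟩ := Stlc.ren_succ_denote e2
    rw [he1 x G, he2 y D]
    exact hR n B B' e1₀ e2₀

theorem REL_sub1 {σ τ : ℕ → Tm} {s t : ℕ → Stlc.Tm} {Γ Δ : Stlc.Ctx}
    {G : Stlc.Ctx.denote Γ} {D : Stlc.Ctx.denote Δ}
    (hR : REL σ τ s t Γ Δ G D) {X Y : Stlc.Ty}
    {x : Option (Stlc.Ty.denote X)} {y : Option (Stlc.Ty.denote Y)}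
    (hxy : Stlc.MRel X Y x y) :
    REL (Tm.liftN σ 2) (Tm.liftN τ 2)
      (fun m => (sub1nil m).subst (Stlc.Tm.liftN s 1))
      (fun m => (sub1nil m).subst (Stlc.Tm.liftN t 1))
      (X::Γ) (Y::Δ) (x, G) (y, D) := by
  intro n B B' e1 e2
  match n with
  | 0 =>
    have hh : ∀ (θ : ℕ → Tm) (w : ℕ → Stlc.Tm),
        (eraseTm (Tm.liftN θ 2 0)).subst (fun m => (sub1nil m).subst (Stlc.Tm.liftN w 1))
          = Stlc.Tm.var 0 := by
      intro θ w
      rw [show Tm.liftN θ 2 0 = Tm.var 0 from by simp [Tm.liftN]]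
      rw [erase_var, Stlc.Tm.subst_var]
      rw [show sub1nil 0 = .var 0 from rfl, Stlc.Tm.subst_var]
      simp [Stlc.Tm.liftN]
    revert e1 e2
    rw [hh σ s, hh τ t]
    intro e1 e2
    exact var0_rel hxy e1 e2 _ _
  | 1 =>
    have hh : ∀ (θ : ℕ → Tm) (w : ℕ → Stlc.Tm),
        (eraseTm (Tm.liftN θ 2 1)).subst (fun m => (sub1nil m).subst (Stlc.Tm.liftN w 1))
          = Stlc.Tm.nil := by
      intro θ w
      rw [show Tm.liftN θ 2 1 = Tm.var 1 from by simp [Tm.liftN]]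
      rw [erase_var, Stlc.Tm.subst_var]
      rfl
    revert e1 e2
    rw [hh σ s, hh τ t]
    intro e1 e2
    exact nil_rel e1 e2 _ _
  | (n+2) =>
    have hh : ∀ (θ : ℕ → Tm) (w : ℕ → Stlc.Tm),
        (eraseTm (Tm.liftN θ 2 (n+2))).subst (fun m => (sub1nil m).subst (Stlc.Tm.liftN w 1))
          = ((eraseTm (θ n)).subst w).rename (· + 1) := by
      intro θ w
      rw [show Tm.liftN θ 2 (n+2) = (θ n).rename (· + 2) from by simp [Tm.liftN]]
      rw [erase_rename, term_shift1nil]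
    revert e1 e2
    rw [hh σ s, hh τ t]
    intro e1 e2
    obtain ⟨e1₀, he1⟩ := Stlc.ren_succ_denote e1
    obtain ⟨e2₀, he2⟩ := Stlc.ren_succ_denote e2
    rw [he1 x G, he2 y D]
    exact hR n B B' e1₀ e2₀

end Ert

namespace Ert

theorem err_rel {Γ Δ : Stlc.Ctx} {C C' : Stlc.Ty}
    (d : Stlc.HasType Γ .err C) (d' : Stlc.HasType Δ .err C')
    (G : Stlc.Ctx.denote Γ) (D : Stlc.Ctx.denote Δ) :
    Stlc.MRel C C' (d.denote G) (d'.denote D) := by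
  cases d; cases d'; simp only [Stlc.HasType.denote]; exact Stlc.MRel_none_none

theorem main : ∀ (a : Tm) (σ τ : ℕ → Tm) (s t : ℕ → Stlc.Tm) (Γ Δ : Stlc.Ctx)
    (C C' : Stlc.Ty)
    (d : Stlc.HasType Γ ((eraseTm (a.subst σ)).subst s) C)
    (d' : Stlc.HasType Δ ((eraseTm (a.subst τ)).subst t) C')
    (G : Stlc.Ctx.denote Γ) (D : Stlc.Ctx.denote Δ),
    REL σ τ s t Γ Δ G D → Stlc.MRel C C' (d.denote G) (d'.denote D) := by
  intro a
  induction a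
  case var n =>
    intro σ τ s t Γ Δ C C' d d' G D hR
    revert d d'
    rw [Tm.subst_var, Tm.subst_var]
    intro d d'
    exact hR n C C' d d'
  case zero =>
    intro σ τ s t Γ Δ C C' d d' G D hR
    cases d; cases d'
    simp only [Stlc.HasType.denote]
    exact Stlc.MRel_refl _
  case succ =>
    intro σ τ s t Γ Δ C C' d d' G D hR
    cases d; cases d'
    simp only [Stlc.HasType.denote]
    exact Stlc.MRel_refl _
  case abort p ih =>
    intro σ τ s t Γ Δ C C' d d' G D hR
    exact err_rel d d' G D
  case lam A e ihA ihe =>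
    intro σ τ s t Γ Δ C C' d d' G D hR
    have hh : ∀ (θ : ℕ → Tm) (w : ℕ → Stlc.Tm),
        (eraseTm ((Tm.lam A e).subst θ)).subst w
          = .lam (eraseTy (A.subst θ))
              ((eraseTm (e.subst (Tm.liftN θ 1))).subst (Stlc.Tm.liftN w 1)) := by
      intro θ w
      rw [Tm.subst_lam]; simp only [eraseTm]; rw [Stlc.Tm.subst_lam]
    revert d d'
    rw [hh σ s, hh τ t]
    intro d d'
    cases d with | lam db =>
    cases d' with | lam db' =>
    simp only [Stlc.HasType.denote]
    apply Stlc.MRel_some_some.mpr; apply (Stlc.V_arrow _ _).mpr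
    intro x y hxy
    exact ihe (Tm.liftN σ 1) (Tm.liftN τ 1) (Stlc.Tm.liftN s 1) (Stlc.Tm.liftN t 1)
      _ _ _ _ db db' _ _ (REL_lift1 hR (Stlc.MRel_some_some.mpr hxy))
  case app f a ihf iha =>
    intro σ τ s t Γ Δ C C' d d' G D hR
    have hh : ∀ (θ : ℕ → Tm) (w : ℕ → Stlc.Tm),
        (eraseTm ((Tm.app f a).subst θ)).subst w
          = .app ((eraseTm (f.subst θ)).subst w) ((eraseTm (a.subst θ)).subst w) := by
      intro θ w
      rw [Tm.subst_app]; simp only [eraseTm]; rw [Stlc.Tm.subst_app]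
    revert d d'
    rw [hh σ s, hh τ t]
    intro d d'
    cases d with | app df da =>
    cases d' with | app df' da' =>
    simp only [Stlc.HasType.denote]
    exact Stlc.MRel_bind (ihf σ τ s t _ _ _ _ df df' G D hR) fun F F' hFF =>
      Stlc.MRel_bind (iha σ τ s t _ _ _ _ da da' G D hR) fun x y hxy => hFF x y hxy
  case pair a b iha ihb =>
    intro σ τ s t Γ Δ C C' d d' G D hR
    have hh : ∀ (θ : ℕ → Tm) (w : ℕ → Stlc.Tm),
        (eraseTm ((Tm.pair a b).subst θ)).subst w
          = .pair ((eraseTm (a.subst θ)).subst w) ((eraseTm (b.subst θ)).subst w) := by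
      intro θ w
      rw [Tm.subst_pair]; simp only [eraseTm]; rw [Stlc.Tm.subst_pair]
    revert d d'
    rw [hh σ s, hh τ t]
    intro d d'
    cases d with | pair dl dr =>
    cases d' with | pair dl' dr' =>
    simp only [Stlc.HasType.denote]
    exact Stlc.MRel_bind (iha σ τ s t _ _ _ _ dl dl' G D hR) fun x y hxy =>
      Stlc.MRel_map (ihb σ τ s t _ _ _ _ dr dr' G D hR) fun u v huv => ⟨hxy, huv⟩
  case letPair Cm e e' ihC ihe ihe' =>
    intro σ τ s t Γ Δ C C' d d' G D hR
    have hh : ∀ (θ : ℕ → Tm) (w : ℕ → Stlc.Tm),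
        (eraseTm ((Tm.letPair Cm e e').subst θ)).subst w
          = .letPair ((eraseTm (e.subst θ)).subst w)
              ((eraseTm (e'.subst (Tm.liftN θ 2))).subst (Stlc.Tm.liftN w 2)) := by
      intro θ w
      rw [Tm.subst_letPair]; simp only [eraseTm]; rw [Stlc.Tm.subst_letPair]
    revert d d'
    rw [hh σ s, hh τ t]
    intro d d'
    cases d with | letPair de db =>
    cases d' with | letPair de' db' =>
    simp only [Stlc.HasType.denote]
    refine Stlc.MRel_bind (ihe σ τ s t _ _ _ _ de de' G D hR) fun p q hpq => ?_
    obtain ⟨hp1, hp2⟩ := hpq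
    exact ihe' (Tm.liftN σ 2) (Tm.liftN τ 2) (Stlc.Tm.liftN s 2) (Stlc.Tm.liftN t 2)
      _ _ _ _ db db' _ _
      (REL_lift2 hR (Stlc.MRel_some_some.mpr hp1) (Stlc.MRel_some_some.mpr hp2))
  case inl a ih =>
    intro σ τ s t Γ Δ C C' d d' G D hR
    have hh : ∀ (θ : ℕ → Tm) (w : ℕ → Stlc.Tm),
        (eraseTm ((Tm.inl a).subst θ)).subst w = .inl ((eraseTm (a.subst θ)).subst w) := by
      intro θ w
      rw [Tm.subst_inl]; simp only [eraseTm]; rw [Stlc.Tm.subst_inl]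
    revert d d'
    rw [hh σ s, hh τ t]
    intro d d'
    cases d with | inl da =>
    cases d' with | inl da' =>
    simp only [Stlc.HasType.denote]
    exact Stlc.MRel_map (ih σ τ s t _ _ _ _ da da' G D hR) fun x y hxy => hxy
  case inr a ih =>
    intro σ τ s t Γ Δ C C' d d' G D hR
    have hh : ∀ (θ : ℕ → Tm) (w : ℕ → Stlc.Tm),
        (eraseTm ((Tm.inr a).subst θ)).subst w = .inr ((eraseTm (a.subst θ)).subst w) := by
      intro θ w
      rw [Tm.subst_inr]; simp only [eraseTm]; rw [Stlc.Tm.subst_inr]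
    revert d d'
    rw [hh σ s, hh τ t]
    intro d d'
    cases d with | inr da =>
    cases d' with | inr da' =>
    simp only [Stlc.HasType.denote]
    exact Stlc.MRel_map (ih σ τ s t _ _ _ _ da da' G D hR) fun x y hxy => hxy
  case cases Cm e l r ihC ihe ihl ihr =>
    intro σ τ s t Γ Δ C C' d d' G D hR
    have hh : ∀ (θ : ℕ → Tm) (w : ℕ → Stlc.Tm),
        (eraseTm ((Tm.cases Cm e l r).subst θ)).subst w
          = .cases ((eraseTm (e.subst θ)).subst w)
              ((eraseTm (l.subst (Tm.liftN θ 1))).subst (Stlc.Tm.liftN w 1))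
              ((eraseTm (r.subst (Tm.liftN θ 1))).subst (Stlc.Tm.liftN w 1)) := by
      intro θ w
      rw [Tm.subst_cases]; simp only [eraseTm]; rw [Stlc.Tm.subst_cases]
    revert d d'
    rw [hh σ s, hh τ t]
    intro d d'
    cases d with | cases de dl dr =>
    cases d' with | cases de' dl' dr' =>
    simp only [Stlc.HasType.denote]
    refine Stlc.MRel_bind (ihe σ τ s t _ _ _ _ de de' G D hR) fun v w hvw => ?_
    cases v with
    | inl x =>
      cases w with
      | inl y =>
        exact ihl (Tm.liftN σ 1) (Tm.liftN τ 1) (Stlc.Tm.liftN s 1) (Stlc.Tm.liftN t 1)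
          _ _ _ _ dl dl' _ _ (REL_lift1 hR (Stlc.MRel_some_some.mpr hvw))
      | inr y => exact hvw.elim
    | inr x =>
      cases w with
      | inl y => exact hvw.elim
      | inr y =>
        exact ihr (Tm.liftN σ 1) (Tm.liftN τ 1) (Stlc.Tm.liftN s 1) (Stlc.Tm.liftN t 1)
          _ _ _ _ dr dr' _ _ (REL_lift1 hR (Stlc.MRel_some_some.mpr hvw))
  case lamPr φ e ihφ ihe =>
    intro σ τ s t Γ Δ C C' d d' G D hR
    have hh : ∀ (θ : ℕ → Tm) (w : ℕ → Stlc.Tm),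
        (eraseTm ((Tm.lamPr φ e).subst θ)).subst w
          = .lam .unit ((eraseTm (e.subst (Tm.liftN θ 1))).subst (Stlc.Tm.liftN w 1)) := by
      intro θ w
      rw [Tm.subst_lamPr]; simp only [eraseTm]; rw [Stlc.Tm.subst_lam]
    revert d d'
    rw [hh σ s, hh τ t]
    intro d d'
    cases d with | lam db =>
    cases d' with | lam db' =>
    simp only [Stlc.HasType.denote]
    apply Stlc.MRel_some_some.mpr; apply (Stlc.V_arrow _ _).mpr
    intro x y hxy
    exact ihe (Tm.liftN σ 1) (Tm.liftN τ 1) (Stlc.Tm.liftN s 1) (Stlc.Tm.liftN t 1)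
      _ _ _ _ db db' _ _ (REL_lift1 hR (Stlc.MRel_some_some.mpr hxy))
  case appPr f p ihf ihp =>
    intro σ τ s t Γ Δ C C' d d' G D hR
    have hh : ∀ (θ : ℕ → Tm) (w : ℕ → Stlc.Tm),
        (eraseTm ((Tm.appPr f p).subst θ)).subst w
          = .app ((eraseTm (f.subst θ)).subst w) .nil := by
      intro θ w
      rw [Tm.subst_appPr]; simp only [eraseTm]; rw [Stlc.Tm.subst_app, Stlc.Tm.subst_nil]
    revert d d'
    rw [hh σ s, hh τ t]
    intro d d'
    cases d with | app df dn =>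
    cases d' with | app df' dn' =>
    cases dn; cases dn'
    simp only [Stlc.HasType.denote]
    exact Stlc.MRel_bind (ihf σ τ s t _ _ _ _ df df' G D hR) fun F F' hFF =>
      Stlc.MRel_bind (Stlc.MRel_refl (A := Stlc.Ty.unit) (some ())) fun u v huv => hFF u v huv
  case elem a p iha ihp =>
    intro σ τ s t Γ Δ C C' d d' G D hR
    have hh : ∀ (θ : ℕ → Tm) (w : ℕ → Stlc.Tm),
        (eraseTm ((Tm.elem a p).subst θ)).subst w = (eraseTm (a.subst θ)).subst w := by
      intro θ w
      rw [Tm.subst_elem]; simp only [eraseTm]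
    revert d d'
    rw [hh σ s, hh τ t]
    intro d d'
    exact iha σ τ s t _ _ _ _ d d' G D hR
  case letSet Cm e e' ihC ihe ihe' =>
    intro σ τ s t Γ Δ C C' d d' G D hR
    have hh : ∀ (θ : ℕ → Tm) (w : ℕ → Stlc.Tm),
        (eraseTm ((Tm.letSet Cm e e').subst θ)).subst w
          = .letIn ((eraseTm (e.subst θ)).subst w)
              ((eraseTm (e'.subst (Tm.liftN θ 2))).subst
                (fun m => (sub0nil m).subst (Stlc.Tm.liftN w 1))) := by
      intro θ w
      rw [Tm.subst_letSet]; simp only [eraseTm]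
      rw [Stlc.Tm.subst_letIn, Stlc.Tm.subst_subst]
    revert d d'
    rw [hh σ s, hh τ t]
    intro d d'
    cases d with | letIn de db =>
    cases d' with | letIn de' db' =>
    simp only [Stlc.HasType.denote]
    refine Stlc.MRel_bind (ihe σ τ s t _ _ _ _ de de' G D hR) fun v v' hv => ?_
    exact ihe' (Tm.liftN σ 2) (Tm.liftN τ 2) _ _ _ _ _ _ db db' _ _
      (REL_sub0 hR (Stlc.MRel_some_some.mpr hv))
  case lamIr A e ihA ihe =>
    intro σ τ s t Γ Δ C C' d d' G D hR
    have hh : ∀ (θ : ℕ → Tm) (w : ℕ → Stlc.Tm),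
        (eraseTm ((Tm.lamIr A e).subst θ)).subst w
          = .lam .unit ((eraseTm (e.subst (Tm.liftN θ 1))).subst (Stlc.Tm.liftN w 1)) := by
      intro θ w
      rw [Tm.subst_lamIr]; simp only [eraseTm]; rw [Stlc.Tm.subst_lam]
    revert d d'
    rw [hh σ s, hh τ t]
    intro d d'
    cases d with | lam db =>
    cases d' with | lam db' =>
    simp only [Stlc.HasType.denote]
    apply Stlc.MRel_some_some.mpr; apply (Stlc.V_arrow _ _).mpr
    intro x y hxy
    exact ihe (Tm.liftN σ 1) (Tm.liftN τ 1) (Stlc.Tm.liftN s 1) (Stlc.Tm.liftN t 1)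
      _ _ _ _ db db' _ _ (REL_lift1 hR (Stlc.MRel_some_some.mpr hxy))
  case appIr f a ihf iha =>
    intro σ τ s t Γ Δ C C' d d' G D hR
    have hh : ∀ (θ : ℕ → Tm) (w : ℕ → Stlc.Tm),
        (eraseTm ((Tm.appIr f a).subst θ)).subst w
          = .app ((eraseTm (f.subst θ)).subst w) .nil := by
      intro θ w
      rw [Tm.subst_appIr]; simp only [eraseTm]; rw [Stlc.Tm.subst_app, Stlc.Tm.subst_nil]
    revert d d'
    rw [hh σ s, hh τ t]
    intro d d'
    cases d with | app df dn =>
    cases d' with | app df' dn' =>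
    cases dn; cases dn'
    simp only [Stlc.HasType.denote]
    exact Stlc.MRel_bind (ihf σ τ s t _ _ _ _ df df' G D hR) fun F F' hFF =>
      Stlc.MRel_bind (Stlc.MRel_refl (A := Stlc.Ty.unit) (some ())) fun u v huv => hFF u v huv
  case repr a b iha ihb =>
    intro σ τ s t Γ Δ C C' d d' G D hR
    have hh : ∀ (θ : ℕ → Tm) (w : ℕ → Stlc.Tm),
        (eraseTm ((Tm.repr a b).subst θ)).subst w = (eraseTm (b.subst θ)).subst w := by
      intro θ w
      rw [Tm.subst_repr]; simp only [eraseTm]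
    revert d d'
    rw [hh σ s, hh τ t]
    intro d d'
    exact ihb σ τ s t _ _ _ _ d d' G D hR
  case letRepr Cm e e' ihC ihe ihe' =>
    intro σ τ s t Γ Δ C C' d d' G D hR
    have hh : ∀ (θ : ℕ → Tm) (w : ℕ → Stlc.Tm),
        (eraseTm ((Tm.letRepr Cm e e').subst θ)).subst w
          = .letIn ((eraseTm (e.subst θ)).subst w)
              ((eraseTm (e'.subst (Tm.liftN θ 2))).subst
                (fun m => (sub1nil m).subst (Stlc.Tm.liftN w 1))) := by
      intro θ w
      rw [Tm.subst_letRepr]; simp only [eraseTm]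
      rw [Stlc.Tm.subst_letIn, Stlc.Tm.subst_subst]
    revert d d'
    rw [hh σ s, hh τ t]
    intro d d'
    cases d with | letIn de db =>
    cases d' with | letIn de' db' =>
    simp only [Stlc.HasType.denote]
    refine Stlc.MRel_bind (ihe σ τ s t _ _ _ _ de de' G D hR) fun v v' hv => ?_
    exact ihe' (Tm.liftN σ 2) (Tm.liftN τ 2) _ _ _ _ _ _ db db' _ _
      (REL_sub1 hR (Stlc.MRel_some_some.mpr hv))
  case natrec Cm e z s' ihC ihe ihz ihs =>
    intro σ τ s t Γ Δ C C' d d' G D hR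
    have hh : ∀ (θ : ℕ → Tm) (w : ℕ → Stlc.Tm),
        (eraseTm ((Tm.natrec Cm e z s').subst θ)).subst w
          = .natrec ((eraseTm (e.subst θ)).subst w) ((eraseTm (z.subst θ)).subst w)
              ((eraseTm (s'.subst (Tm.liftN θ 2))).subst
                (fun m => (sub1nil m).subst (Stlc.Tm.liftN w 1))) := by
      intro θ w
      rw [Tm.subst_natrec]; simp only [eraseTm]
      rw [Stlc.Tm.subst_natrec, Stlc.Tm.subst_subst]
    revert d d'
    rw [hh σ s, hh τ t]
    intro d d'
    cases d with | natrec de dz ds =>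
    cases d' with | natrec de' dz' ds' =>
    simp only [Stlc.HasType.denote]
    refine Stlc.MRel_bind (ihe σ τ s t _ _ _ _ de de' G D hR) fun n m hnm => ?_
    have hnm' : n = m := hnm
    subst hnm'
    exact Stlc.iterOpt_rel (ihz σ τ s t _ _ _ _ dz dz' G D hR)
      (fun c c' hcc => Stlc.MRel_bind hcc fun v v' hvv =>
        ihs (Tm.liftN σ 2) (Tm.liftN τ 2) _ _ _ _ _ _ ds ds' _ _
          (REL_sub1 hR (Stlc.MRel_some_some.mpr hvv))) n
  all_goals
    intro σ τ s t Γ Δ C C' d d' G D hR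
    exact nil_rel d d' G D

end Ert

namespace Ert

/-- **Corollary (Substitution and Erasure Denotation Commute).** Given a λ_ert
derivation `Γ ⊢ a : A` and a strict well-formed λ_ert substitution `Γ ⊢ σ : Δ`,
the λ_stlc denotations of the erasures satisfy
`⟦|Γ ⊢ a : A|⟧ ∘ ⟦|Γ ⊢ σ : Δ|⟧ = ⟦|Δ ⊢ [σ]a : [σ]A|⟧` as functions
`⟦|Δ|⟧ → M ⟦|A|⟧` (note `|[σ]A| = |A|`; the λ_stlc derivations, which exist by
the erasure lemma and are quantified over here, are unique). -/
theorem subst_erase_denote_commute {σ : ℕ → Tm} {Γ Δ : Ctx} {a A : Tm}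
    (ha : HasTy Γ a A) (hσ : SubstStrict σ Γ Δ)
    (d : Stlc.HasType (eraseCtx Γ) (eraseTm a) (eraseTy A))
    (W : Stlc.SubstWf (eraseSub σ) (eraseCtx Γ) (eraseCtx Δ))
    (d' : Stlc.HasType (eraseCtx Δ) (eraseTm (a.subst σ)) (eraseTy A)) :
    d.denote ∘ Stlc.substDenote (eraseCtx Γ) W = d'.denote := by
  funext D
  show d.denote (Stlc.substDenote (eraseCtx Γ) W D) = d'.denote D
  have hRel : REL (fun n => Tm.var n) σ (fun n => Stlc.Tm.var n) (fun n => Stlc.Tm.var n)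
      (eraseCtx Γ) (eraseCtx Δ) (Stlc.substDenote (eraseCtx Γ) W D) D := by
    intro n B B' e1 e2
    have hv : (eraseTm (Tm.var n)).subst (fun n => Stlc.Tm.var n) = Stlc.Tm.var n := by
      rw [erase_var, Stlc.Tm.subst_var]
    have hw : (eraseTm (σ n)).subst (fun n => Stlc.Tm.var n) = eraseTm (σ n) :=
      Stlc.Tm.subst_idv _
    revert e1 e2
    rw [hv, hw]
    intro e1 e2
    cases e1 with | var h =>
    simp only [Stlc.HasType.denote]
    rw [Stlc.substDenote_lookup h W D]
    exact Stlc.coh (W n B h) e2 D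
  have key : ∀ (u1 u2 : Stlc.Tm)
      (h1 : u1 = (eraseTm (a.subst (fun n => Tm.var n))).subst (fun n => Stlc.Tm.var n))
      (h2 : u2 = (eraseTm (a.subst σ)).subst (fun n => Stlc.Tm.var n))
      (d : Stlc.HasType (eraseCtx Γ) u1 (eraseTy A))
      (d' : Stlc.HasType (eraseCtx Δ) u2 (eraseTy A)),
      d.denote (Stlc.substDenote (eraseCtx Γ) W D) = d'.denote D := by
    intro u1 u2 h1 h2 d d'
    subst h1; subst h2
    refine (Stlc.MRel_eq _ _).mp ?_
    exact main a (fun n => Tm.var n) σ (fun n => Stlc.Tm.var n) (fun n => Stlc.Tm.var n)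
      _ _ _ _ d d' _ D hRel
  have e1 : (eraseTm (a.subst (fun n => Tm.var n))).subst (fun n => Stlc.Tm.var n)
      = eraseTm a := by
    rw [Tm.subst_idv, Stlc.Tm.subst_idv]
  have e2 : (eraseTm (a.subst σ)).subst (fun n => Stlc.Tm.var n) = eraseTm (a.subst σ) :=
    Stlc.Tm.subst_idv _
  exact key _ _ e1.symm e2.symm d d'

end Ert
end
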